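/- arXiv:2002.06343 — 4 statements merged into one kernel-verified Lean document; each statement's English description precedes it below -/
import Mathlib

section
/- Let Ω ⊂ ℝ³ be a bounded C² domain with boundary Γ, unit outward normal n, orthogonal tangential projection P = I₃ − n⊗n, and Weingarten map W = −∇_Γ n. If u ∈ C¹(Ω̄;ℝ³) satisfies u·n = 0 on Γ, then 2 P D(u) n − (curl u) × n = 2 W u on Γ, where D(u) = (∇u + (∇u)ᵀ)/2 is the strain rate tensor. -/
open Matrix MeasureTheory
open scoped ENNReal

noncomputable section

/-- `i`-th partial derivative realized via the Fréchet derivative. -/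
def gradv (f : (Fin 3 → ℝ) → ℝ) (x : Fin 3 → ℝ) : Fin 3 → ℝ :=
  fun i => fderiv ℝ f x (Pi.single i 1)

/-- Jacobian matrix with entries `(jac3 u x) i j = ∂ᵢ uⱼ (x)`. -/
def jac3 (u : (Fin 3 → ℝ) → Fin 3 → ℝ) (x : Fin 3 → ℝ) : Matrix (Fin 3) (Fin 3) ℝ :=
  Matrix.of fun i j => fderiv ℝ (fun z => u z j) x (Pi.single i 1)

/-- Orthogonal projection `P = I₃ - n ⊗ n`. -/
def proj3 (n : Fin 3 → ℝ) : Matrix (Fin 3) (Fin 3) ℝ := 1 - Matrix.vecMulVec n n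

/-- Euclidean norm of a vector in ℝ³. -/
def vnorm3 (v : Fin 3 → ℝ) : ℝ := Real.sqrt (∑ i, v i ^ 2)

/-- Frobenius norm of a 3×3 matrix. -/
def frob3 (A : Matrix (Fin 3) (Fin 3) ℝ) : ℝ := Real.sqrt (∑ i, ∑ j, A i j ^ 2)

/-- Frobenius inner product `A : B`. -/
def frobInner (A B : Matrix (Fin 3) (Fin 3) ℝ) : ℝ := ∑ i, ∑ j, A i j * B i j

/-- Cross product in ℝ³. -/
def cross3 (a b : Fin 3 → ℝ) : Fin 3 → ℝ :=
  ![a 1 * b 2 - a 2 * b 1, a 2 * b 0 - a 0 * b 2, a 0 * b 1 - a 1 * b 0]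

/-- Weingarten map `W = -∇_Γ n = -P ∇n̄` of the level surface of `d`, where the
unit normal is `n = ∇d`. -/
def wein (d : (Fin 3 → ℝ) → ℝ) (y : Fin 3 → ℝ) : Matrix (Fin 3) (Fin 3) ℝ :=
  -(proj3 (gradv d y) * jac3 (fun x => gradv d x) y)

/-- Tangential gradient `∇_Γ f = P ∇f̃` of (the restriction to the surface of) `f`. -/
def tgrad (d f : (Fin 3 → ℝ) → ℝ) (y : Fin 3 → ℝ) : Fin 3 → ℝ :=
  (proj3 (gradv d y)).mulVec (gradv f y)

/-- Tangential gradient matrix `∇_Γ u = P ∇ũ` of a vector field. -/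
def tjac (d : (Fin 3 → ℝ) → ℝ) (u : (Fin 3 → ℝ) → Fin 3 → ℝ) (y : Fin 3 → ℝ) :
    Matrix (Fin 3) (Fin 3) ℝ :=
  proj3 (gradv d y) * jac3 u y

/-- Strain rate tensor `D(u) = (∇u + (∇u)ᵀ)/2`. -/
def symmD (u : (Fin 3 → ℝ) → Fin 3 → ℝ) (x : Fin 3 → ℝ) : Matrix (Fin 3) (Fin 3) ℝ :=
  (1 / 2 : ℝ) • (jac3 u x + (jac3 u x)ᵀ)

/-- Curl of a vector field on ℝ³ (with the convention `(∇u)ᵢⱼ = ∂ᵢuⱼ`). -/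
def curl3 (u : (Fin 3 → ℝ) → Fin 3 → ℝ) (x : Fin 3 → ℝ) : Fin 3 → ℝ :=
  ![jac3 u x 1 2 - jac3 u x 2 1, jac3 u x 2 0 - jac3 u x 0 2, jac3 u x 0 1 - jac3 u x 1 0]

/-- Covariant derivative `∇̄_X Y = P (X·∇)Ỹ` on the level surface of `d`. -/
def covD (d : (Fin 3 → ℝ) → ℝ) (X Y : (Fin 3 → ℝ) → Fin 3 → ℝ) (y : Fin 3 → ℝ) : Fin 3 → ℝ :=
  (proj3 (gradv d y)).mulVec ((jac3 Y y)ᵀ.mulVec (X y))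

lemma clm_eval (L : (Fin 3 → ℝ) →L[ℝ] ℝ) (v : Fin 3 → ℝ) :
    L v = ∑ i, v i * L (Pi.single i 1) := by
  have hv : v = ∑ i : Fin 3, v i • (Pi.single i (1:ℝ) : Fin 3 → ℝ) := by
    rw [← Finset.univ_sum_single v]
    refine Finset.sum_congr rfl fun i _ => ?_
    ext j
    by_cases h : j = i <;> simp [h, Pi.single_apply]
  conv_lhs => rw [hv]
  rw [map_sum]
  simp [smul_eq_mul]

/-- Let `Ω ⊂ ℝ³` be a bounded C² domain whose boundary `Γ = ∂Ω` is the
zero level set of a C² function `d` with `|∇d| = 1` near `Γ` (so `n = ∇d` is the unit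
normal, `P = I₃ − n⊗n`, `W = −∇_Γ n`).  If `u` is C¹ up to the boundary and `u·n = 0` on
`Γ`, then `2 P D(u) n − (curl u) × n = 2 W u` on `Γ`, with `D(u) = (∇u + (∇u)ᵀ)/2`. -/
theorem stmt6
    (Ω U : Set (Fin 3 → ℝ)) (hΩo : IsOpen Ω) (hΩb : Bornology.IsBounded Ω)
    (hU : IsOpen U) (hfr : frontier Ω ⊆ U)
    (d : (Fin 3 → ℝ) → ℝ) (hd : ContDiffOn ℝ 2 d U)
    (hlevel : ∀ x ∈ U, (x ∈ frontier Ω ↔ d x = 0))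
    (hunit : ∀ x ∈ U, gradv d x ⬝ᵥ gradv d x = 1)
    (u : (Fin 3 → ℝ) → Fin 3 → ℝ) (hu : ContDiffOn ℝ 1 u U)
    (htan : ∀ y ∈ frontier Ω, u y ⬝ᵥ gradv d y = 0) :
    ∀ y ∈ frontier Ω,
      (2 : ℝ) • ((proj3 (gradv d y)).mulVec ((symmD u y).mulVec (gradv d y))) -
          cross3 (curl3 u y) (gradv d y) =
        (2 : ℝ) • ((wein d y).mulVec (u y)) := by
  intro y hy
  have hyU : y ∈ U := hfr hy
  have hUy : U ∈ nhds y := hU.mem_nhds hyU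
  have hdy : d y = 0 := (hlevel y hyU).1 hy
  have hdfd : ContDiffOn ℝ 1 (fderiv ℝ d) U := hd.fderiv_of_isOpen (m := 1) hU (by norm_num)
  have hNc : ∀ j, ContDiffOn ℝ 1 (fun x => gradv d x j) U := fun j => by
    simpa [gradv] using hdfd.clm_apply (contDiffOn_const (c := (Pi.single j 1 : Fin 3 → ℝ)))
  have huc : ∀ j, ContDiffOn ℝ 1 (fun x => u x j) U := fun j =>
    (ContinuousLinearMap.proj j : ((Fin 3 → ℝ)) →L[ℝ] ℝ).contDiff.comp_contDiffOn hu
  have hgc : ContDiffOn ℝ 1 (fun x => ∑ j, u x j * gradv d x j) U :=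
    ContDiffOn.sum fun j _ => (huc j).mul (hNc j)
  have hgd : HasStrictFDerivAt (fun x => ∑ j, u x j * gradv d x j)
      (fderiv ℝ (fun x => ∑ j, u x j * gradv d x j) y) y :=
    (hgc.contDiffAt hUy).hasStrictFDerivAt (by norm_num)
  have hdd : HasStrictFDerivAt d (fderiv ℝ d y) y :=
    (hd.contDiffAt hUy).hasStrictFDerivAt (by norm_num)
  have hg0 : ∀ x ∈ frontier Ω, ∑ j, u x j * gradv d x j = 0 := fun x hx => by
    simpa [dotProduct] using htan x hx
  have hextr : IsLocalExtrOn (fun x => ∑ j, u x j * gradv d x j) {x | d x = d y} y := by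
    refine Or.inl ?_
    filter_upwards [nhdsWithin_le_nhds hUy, self_mem_nhdsWithin] with x hxU hxs
    have hx0 : d x = 0 := by simpa [hdy] using hxs
    simp only [hg0 x ((hlevel x hxU).2 hx0), hg0 y hy, le_refl]
  obtain ⟨a, b, hab, hsum⟩ := hextr.exists_multipliers_of_hasStrictFDerivAt_1d hdd hgd
  have hsum' : ∀ w, a * fderiv ℝ d y w
      + b * fderiv ℝ (fun x => ∑ j, u x j * gradv d x j) y w = 0 := by
    intro w
    have := DFunLike.congr_fun hsum w
    simpa [smul_eq_mul] using this
  have hbase : ∀ i, fderiv ℝ d y (Pi.single i 1) = gradv d y i := fun i => rfl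
  have hnn : (∑ i, gradv d y i * gradv d y i) = 1 := by
    have := hunit y hyU
    simpa [dotProduct] using this
  have hb : b ≠ 0 := by
    intro hb0
    have ha : a ≠ 0 := by
      intro ha0
      exact hab (by simp [ha0, hb0, Prod.ext_iff])
    have h1 := hsum' (gradv d y)
    have h2 : fderiv ℝ d y (gradv d y) = 1 := by
      rw [clm_eval]
      simp only [hbase]
      exact hnn
    rw [hb0, h2] at h1
    simp at h1
    exact ha h1
  set lam := -a / b with hlam
  have e0 : ∀ i, fderiv ℝ (fun x => ∑ j, u x j * gradv d x j) y (Pi.single i 1)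
      = lam * gradv d y i := by
    intro i
    have h1 := hsum' (Pi.single i 1)
    rw [hbase i] at h1
    rw [hlam]
    field_simp
    linear_combination h1
  have hud : ∀ j, DifferentiableAt ℝ (fun x => u x j) y :=
    fun j => ((huc j).differentiableOn (by norm_num)).differentiableAt hUy
  have hNd : ∀ j, DifferentiableAt ℝ (fun x => gradv d x j) y :=
    fun j => ((hNc j).differentiableOn (by norm_num)).differentiableAt hUy
  have hGi : ∀ i, fderiv ℝ (fun x => ∑ j, u x j * gradv d x j) y (Pi.single i 1)
      = (∑ j, gradv d y j * jac3 u y i j) + (∑ j, u y j * jac3 (fun x => gradv d x) y i j) := by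
    intro i
    rw [fderiv_fun_sum (A := fun j x => u x j * gradv d x j) (fun j _ => ((hud j).mul (hNd j)))]
    rw [ContinuousLinearMap.sum_apply, ← Finset.sum_add_distrib]
    refine Finset.sum_congr rfl fun j _ => ?_
    rw [fderiv_fun_mul (hud j) (hNd j)]
    simp only [jac3, gradv, ContinuousLinearMap.add_apply, ContinuousLinearMap.smul_apply,
      smul_eq_mul, Matrix.of_apply]
    ring
  have E : ∀ i, (∑ j, gradv d y j * jac3 u y i j)
      + (∑ j, u y j * jac3 (fun x => gradv d x) y i j) = lam * gradv d y i :=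
    fun i => (hGi i).symm.trans (e0 i)
  have E0 := E 0; have E1 := E 1; have E2 := E 2
  simp only [Fin.sum_univ_three] at E0 E1 E2
  have hnn' := hnn
  simp only [Fin.sum_univ_three] at hnn'
  funext i
  fin_cases i <;>
    simp [Pi.smul_apply, Pi.sub_apply, smul_eq_mul, proj3, symmD, wein, curl3, cross3,
      Matrix.mulVec, dotProduct, Fin.sum_univ_three, Matrix.mul_apply, Matrix.sub_apply,
      Matrix.one_apply, Matrix.vecMulVec_apply, Matrix.neg_apply, Matrix.add_apply,
      Matrix.smul_apply, Matrix.transpose_apply, Matrix.cons_val_zero, Matrix.cons_val_one,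
      Matrix.head_cons, Fin.isValue, Matrix.cons_val_two, Matrix.tail_cons]
  · linear_combination 2*E0 - 2*(gradv d y 0)*(gradv d y 0*E0 + gradv d y 1*E1 + gradv d y 2*E2)
      - 2*lam*(gradv d y 0)*hnn'
  · linear_combination 2*E1 - 2*(gradv d y 1)*(gradv d y 0*E0 + gradv d y 1*E1 + gradv d y 2*E2)
      - 2*lam*(gradv d y 1)*hnn'
  · linear_combination 2*E2 - 2*(gradv d y 2)*(gradv d y 0*E0 + gradv d y 1*E1 + gradv d y 2*E2)
      - 2*lam*(gradv d y 2)*hnn'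
end
end

section
/- Let Γ be a C² closed, connected, oriented surface in ℝ³ with unit outward normal n, and let w(x) = a × x + b (a, b ∈ ℝ³) satisfy w|_Γ · n = 0 on Γ and w ≢ 0. Then a ≠ 0 and a·b = 0, and Γ is invariant under every rotation about the line parallel to a passing through the point b_a := |a|⁻²(a × b). -/
open Matrix MeasureTheory
open scoped ENNReal

noncomputable section

lemma vec3_ext {x y : Fin 3 → ℝ} (h0 : x 0 = y 0) (h1 : x 1 = y 1) (h2 : x 2 = y 2) : x = y := by
  funext i; fin_cases i <;> assumption

lemma dot3 (x y : Fin 3 → ℝ) : x ⬝ᵥ y = x 0 * y 0 + x 1 * y 1 + x 2 * y 2 := by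
  simp [dotProduct, Fin.sum_univ_three]

lemma c30 (a b : Fin 3 → ℝ) : cross3 a b 0 = a 1 * b 2 - a 2 * b 1 := rfl
lemma c31 (a b : Fin 3 → ℝ) : cross3 a b 1 = a 2 * b 0 - a 0 * b 2 := rfl
lemma c32 (a b : Fin 3 → ℝ) : cross3 a b 2 = a 0 * b 1 - a 1 * b 0 := rfl

lemma cross3_triple (u z : Fin 3 → ℝ) :
    cross3 u (cross3 u z) = (u ⬝ᵥ z) • u - (u ⬝ᵥ u) • z := by
  apply vec3_ext <;> simp [c30, c31, c32, dot3] <;> ring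

lemma cross3_lagrange (x y : Fin 3 → ℝ) :
    cross3 x y ⬝ᵥ cross3 x y = (x ⬝ᵥ x) * (y ⬝ᵥ y) - (x ⬝ᵥ y) ^ 2 := by
  simp [dot3, c30, c31, c32]; ring

lemma cross3_dot_left (u z : Fin 3 → ℝ) : cross3 u z ⬝ᵥ u = 0 := by
  simp [dot3, c30, c31, c32]; ring

lemma cross3_dot_right (u z : Fin 3 → ℝ) : cross3 u z ⬝ᵥ z = 0 := by
  simp [dot3, c30, c31, c32]; ring

lemma cross3_bac (u v r : Fin 3 → ℝ) :
    cross3 (cross3 u v) r = (u ⬝ᵥ r) • v - (v ⬝ᵥ r) • u := by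
  apply vec3_ext <;> simp [c30, c31, c32, dot3] <;> ring

lemma cross3_smul_left (s : ℝ) (u v : Fin 3 → ℝ) : cross3 (s • u) v = s • cross3 u v := by
  apply vec3_ext <;> simp [c30, c31, c32] <;> ring

lemma cross3_smul_right (s : ℝ) (u v : Fin 3 → ℝ) : cross3 u (s • v) = s • cross3 u v := by
  apply vec3_ext <;> simp [c30, c31, c32] <;> ring

lemma cross3_add_right (u v w : Fin 3 → ℝ) :
    cross3 u (v + w) = cross3 u v + cross3 u w := by
  apply vec3_ext <;> simp [c30, c31, c32] <;> ring

lemma cross3_self (u : Fin 3 → ℝ) : cross3 u u = 0 := by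
  apply vec3_ext <;> simp [c30, c31, c32] <;> ring

lemma cross3_zero_left (v : Fin 3 → ℝ) : cross3 0 v = 0 := by
  apply vec3_ext <;> simp [c30, c31, c32]

lemma dot_self_nonneg3 (x : Fin 3 → ℝ) : 0 ≤ x ⬝ᵥ x := by
  rw [dot3]; nlinarith [sq_nonneg (x 0), sq_nonneg (x 1), sq_nonneg (x 2)]

lemma dot_self_eq_zero3 {x : Fin 3 → ℝ} (h : x ⬝ᵥ x = 0) : x = 0 := by
  rw [dot3] at h
  have h0 : x 0 = 0 := by nlinarith [sq_nonneg (x 0), sq_nonneg (x 1), sq_nonneg (x 2)]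
  have h1 : x 1 = 0 := by nlinarith [sq_nonneg (x 0), sq_nonneg (x 1), sq_nonneg (x 2)]
  have h2 : x 2 = 0 := by nlinarith [sq_nonneg (x 0), sq_nonneg (x 1), sq_nonneg (x 2)]
  exact vec3_ext (by simpa using h0) (by simpa using h1) (by simpa using h2)

lemma abs_dot_le3 (x y : Fin 3 → ℝ) : |x ⬝ᵥ y| ≤ 3 * ‖x‖ * ‖y‖ := by
  have h0 : ∀ i, |x i| ≤ ‖x‖ := fun i => by simpa using norm_le_pi_norm x i
  have h1 : ∀ i, |y i| ≤ ‖y‖ := fun i => by simpa using norm_le_pi_norm y i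
  have hx : (0:ℝ) ≤ ‖x‖ := norm_nonneg _
  have hy : (0:ℝ) ≤ ‖y‖ := norm_nonneg _
  rw [dot3]
  have : ∀ i : Fin 3, |x i * y i| ≤ ‖x‖ * ‖y‖ := fun i => by
    rw [abs_mul]; exact mul_le_mul (h0 i) (h1 i) (abs_nonneg _) hx
  calc |x 0 * y 0 + x 1 * y 1 + x 2 * y 2| ≤ |x 0 * y 0| + |x 1 * y 1| + |x 2 * y 2| := by
        exact (abs_add_le _ _).trans (by gcongr; exact abs_add_le _ _)
    _ ≤ ‖x‖ * ‖y‖ + ‖x‖ * ‖y‖ + ‖x‖ * ‖y‖ := by gcongr <;> exact this _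
    _ = 3 * ‖x‖ * ‖y‖ := by ring

lemma norm_le_of_unit3 {x : Fin 3 → ℝ} (h : x ⬝ᵥ x = 1) : ‖x‖ ≤ 1 := by
  rw [dot3] at h
  have h0 : |x 0| ≤ 1 := by rw [abs_le]; constructor <;> nlinarith [sq_nonneg (x 0), sq_nonneg (x 1), sq_nonneg (x 2)]
  have h1 : |x 1| ≤ 1 := by rw [abs_le]; constructor <;> nlinarith [sq_nonneg (x 0), sq_nonneg (x 1), sq_nonneg (x 2)]
  have h2 : |x 2| ≤ 1 := by rw [abs_le]; constructor <;> nlinarith [sq_nonneg (x 0), sq_nonneg (x 1), sq_nonneg (x 2)]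
  refine (pi_norm_le_iff_of_nonneg zero_le_one).2 fun i => ?_
  fin_cases i
  · exact h0
  · exact h1
  · exact h2

section Reg
variable {U : Set (Fin 3 → ℝ)} (hU : IsOpen U) {d : (Fin 3 → ℝ) → ℝ} (hd : ContDiffOn ℝ 2 d U)
include hU hd

lemma gradv_contDiffOn : ContDiffOn ℝ 1 (gradv d) U := by
  rw [contDiffOn_pi]
  intro i
  have h1 : ContDiffOn ℝ 1 (fderiv ℝ d) U := hd.fderiv_of_isOpen hU (by norm_num)
  exact (ContinuousLinearMap.apply ℝ ℝ (Pi.single i 1 : Fin 3 → ℝ)).contDiff.comp_contDiffOn h1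

omit hU hd in
lemma coord_contDiff (i : Fin 3) : ContDiff ℝ 1 (fun x : Fin 3 → ℝ => x i) :=
  (ContinuousLinearMap.proj i : (Fin 3 → ℝ) →L[ℝ] ℝ).contDiff

lemma wdot_contDiffOn (a b : Fin 3 → ℝ) :
    ContDiffOn ℝ 1 (fun x => (cross3 a x + b) ⬝ᵥ gradv d x) U := by
  have hg := gradv_contDiffOn hU hd
  have hgi : ∀ i : Fin 3, ContDiffOn ℝ 1 (fun x => gradv d x i) U := by
    intro i
    exact (contDiffOn_pi.1 hg) i
  have hw : ∀ i : Fin 3, ContDiff ℝ 1 (fun x : Fin 3 → ℝ => (cross3 a x + b) i) := by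
    intro i
    fin_cases i <;>
      · show ContDiff ℝ 1 fun x : Fin 3 → ℝ => _
        simp only [Pi.add_apply, cross3]
        norm_num [Matrix.cons_val_zero, Matrix.cons_val_one]
        fun_prop
  have : (fun x => (cross3 a x + b) ⬝ᵥ gradv d x)
      = fun x => ∑ i : Fin 3, (cross3 a x + b) i * gradv d x i := by
    funext x; simp [dotProduct]
  rw [this]
  apply ContDiffOn.sum
  intro i _
  exact ((hw i).comp_contDiffOn contDiffOn_id).mul (hgi i)

omit hU hd in
lemma fderiv_apply_eq_dot (f : (Fin 3 → ℝ) → ℝ) (x v : Fin 3 → ℝ) :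
    fderiv ℝ f x v = v ⬝ᵥ gradv f x := by
  have hv : v = ∑ i : Fin 3, v i • (Pi.single i (1:ℝ) : Fin 3 → ℝ) := by
    funext j
    simp [Pi.single_apply, Finset.sum_apply]
  conv_lhs => rw [hv]
  rw [map_sum]
  simp [dotProduct, gradv, mul_comm]

omit hU hd in
lemma infDist_triangle3 (x y : Fin 3 → ℝ) (Γ : Set (Fin 3 → ℝ)) (p : Fin 3 → ℝ) (hp : p ∈ Γ) :
    Metric.infDist y Γ ≤ dist y x + dist x p := by
  calc Metric.infDist y Γ ≤ dist y p := Metric.infDist_le_dist_of_mem hp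
    _ ≤ dist y x + dist x p := dist_triangle _ _ _

lemma invariance
    (Γ : Set (Fin 3 → ℝ)) (hΓ : Γ = {x ∈ U | d x = 0})
    (hne : Γ.Nonempty) (hcomp : IsCompact Γ)
    (hunit : ∀ x ∈ U, gradv d x ⬝ᵥ gradv d x = 1)
    (a b : Fin 3 → ℝ)
    (htan : ∀ y ∈ Γ, (cross3 a y + b) ⬝ᵥ gradv d y = 0)
    (c : ℝ → Fin 3 → ℝ) (hc : ∀ t, HasDerivAt c (cross3 a (c t) + b) t)
    (h0 : c 0 ∈ Γ) : ∀ t, c t ∈ Γ := by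
  have hΓU : Γ ⊆ U := by rw [hΓ]; exact fun x hx => hx.1
  have hΓd : ∀ x ∈ Γ, d x = 0 := by rw [hΓ]; exact fun x hx => hx.2
  have hΓcl : IsClosed Γ := hcomp.isClosed
  obtain ⟨δ, hδpos, hδsub⟩ := hcomp.exists_thickening_subset_open hU hΓU
  set ε := δ / 2 with hε
  have hεpos : 0 < ε := by positivity
  set K := {x : Fin 3 → ℝ | Metric.infDist x Γ ≤ ε} with hK
  have hnear : ∀ x : Fin 3 → ℝ, ∃ p ∈ Γ, Metric.infDist x Γ = dist x p :=
    fun x => hcomp.exists_infDist_eq_dist hne x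
  have hKU : K ⊆ U := by
    intro x hx
    obtain ⟨p, hp, hd'⟩ := hnear x
    apply hδsub
    rw [Metric.mem_thickening_iff]
    exact ⟨p, hp, by rw [← hd']; exact lt_of_le_of_lt hx (by rw [hε]; linarith)⟩
  have hKcl : IsClosed K := isClosed_le (Metric.continuous_infDist_pt Γ) continuous_const
  have hKbd : Bornology.IsBounded K := by
    obtain ⟨M, hM⟩ := isBounded_iff_forall_norm_le.1 hcomp.isBounded
    refine isBounded_iff_forall_norm_le.2 ⟨M + ε, fun x hx => ?_⟩
    obtain ⟨p, hp, hd'⟩ := hnear x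
    have : dist x p ≤ ε := by rw [← hd']; exact hx
    calc ‖x‖ ≤ ‖p‖ + dist x p := by
          rw [dist_eq_norm]
          have := norm_add_le (x - p) p
          simp only [sub_add_cancel] at this
          linarith
      _ ≤ M + ε := add_le_add (hM p hp) this
  have hKcomp : IsCompact K := Metric.isCompact_of_isClosed_isBounded hKcl hKbd
  have hΓK : Γ ⊆ K := fun p hp => by
    show Metric.infDist p Γ ≤ ε
    rw [Metric.infDist_zero_of_mem hp]; exact le_of_lt hεpos
  set h : (Fin 3 → ℝ) → ℝ := fun x => (cross3 a x + b) ⬝ᵥ gradv d x with hh_def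
  have hh : ContDiffOn ℝ 1 h U := wdot_contDiffOn hU hd a b
  have hdiffh : ∀ x ∈ U, DifferentiableAt ℝ h x := fun x hx =>
    (hh.differentiableOn one_ne_zero).differentiableAt (hU.mem_nhds hx)
  have hfc : ContinuousOn (fderiv ℝ h) U := hh.continuousOn_fderiv_of_isOpen hU le_rfl
  obtain ⟨C, hC⟩ : ∃ C, ∀ q ∈ K, ‖fderiv ℝ h q‖ ≤ C :=
    hKcomp.exists_bound_of_continuousOn (hfc.mono hKU)
  have hCpos : 0 ≤ C := by
    obtain ⟨p, hp⟩ := hne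
    exact le_trans (norm_nonneg _) (hC p (hΓK hp))
  -- L1 : |h x| ≤ C * infDist x Γ on K
  have hL1 : ∀ x ∈ K, |h x| ≤ C * Metric.infDist x Γ := by
    intro x hx
    obtain ⟨p, hp, hdist⟩ := hnear x
    have hseg : segment ℝ p x ⊆ K := by
      intro q hq
      rw [segment_eq_image] at hq
      obtain ⟨s, hs, rfl⟩ := hq
      show Metric.infDist _ Γ ≤ ε
      have h1 : dist ((1 - s) • p + s • x) p ≤ dist x p := by
        rw [dist_eq_norm, dist_eq_norm]
        have : (1 - s) • p + s • x - p = s • (x - p) := by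
          rw [smul_sub]; module
        rw [this, norm_smul]
        calc ‖s‖ * ‖x - p‖ ≤ 1 * ‖x - p‖ := by
              apply mul_le_mul_of_nonneg_right _ (norm_nonneg _)
              rw [Real.norm_eq_abs, abs_le]; constructor <;> [linarith [hs.1]; exact hs.2]
          _ = ‖x - p‖ := one_mul _
      calc Metric.infDist ((1 - s) • p + s • x) Γ ≤ dist ((1 - s) • p + s • x) p :=
            Metric.infDist_le_dist_of_mem hp
        _ ≤ dist x p := h1
        _ = Metric.infDist x Γ := hdist.symm
        _ ≤ ε := hx
    have key := Convex.norm_image_sub_le_of_norm_hasFDerivWithin_le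
      (f := h) (f' := fun q => fderiv ℝ h q)
      (fun q hq => (hdiffh q (hKU (hseg hq))).hasFDerivAt.hasFDerivWithinAt)
      (fun q hq => hC q (hseg hq)) (convex_segment p x)
      (left_mem_segment ℝ p x) (right_mem_segment ℝ p x)
    have hp0 : h p = 0 := htan p hp
    rw [hp0, sub_zero] at key
    calc |h x| = ‖h x‖ := rfl
      _ ≤ C * ‖x - p‖ := key
      _ = C * Metric.infDist x Γ := by rw [hdist, dist_eq_norm]
  -- uniform continuity of gradv d on K
  have hgc : ContinuousOn (gradv d) K := ((gradv_contDiffOn hU hd).continuousOn).mono hKU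
  have hUC := hKcomp.uniformContinuousOn_of_continuous hgc
  rw [Metric.uniformContinuousOn_iff] at hUC
  obtain ⟨s₁, hs₁pos, hs₁⟩ := hUC (1/6) (by norm_num)
  set s₀ := min (s₁ / 2) (ε / 2) with hs₀def
  have hs₀pos : 0 < s₀ := lt_min (by linarith) (by linarith)
  have hs₀ε : s₀ ≤ ε / 2 := min_le_right _ _
  have hs₀s₁ : s₀ < s₁ := lt_of_le_of_lt (min_le_left _ _) (by linarith)
  have hL2 : ∀ x, Metric.infDist x Γ ≤ ε / 2 → |d x| ≤ s₀ / 2 →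
      Metric.infDist x Γ ≤ 2 * |d x| := by
    intro x hx hdx
    have hxK : x ∈ K := le_trans hx (by show ε/2 ≤ ε; linarith)
    have hxU : x ∈ U := hKU hxK
    by_cases hd0 : d x = 0
    · have : x ∈ Γ := by rw [hΓ]; exact ⟨hxU, hd0⟩
      rw [Metric.infDist_zero_of_mem this]; positivity
    · set σ : ℝ := if 0 ≤ d x then 1 else -1 with hσdef
      have hσd : σ * d x = |d x| := by
        by_cases h' : 0 ≤ d x
        · rw [hσdef]; simp only [h', if_true]; rw [abs_of_nonneg h']; ring
        · rw [hσdef]; simp only [h', if_false]; rw [abs_of_neg (lt_of_not_ge h')]; ring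
      have hσσ : σ * σ = 1 := by
        by_cases h' : 0 ≤ d x <;> simp [hσdef, h']
      have hσabs : |σ| = 1 := by
        by_cases h' : 0 ≤ d x <;> simp [hσdef, h']
      set v : Fin 3 → ℝ := (-σ) • gradv d x with hvdef
      have hgnorm : ‖gradv d x‖ ≤ 1 := norm_le_of_unit3 (hunit x hxU)
      have hvnorm : ‖v‖ ≤ 1 := by
        rw [hvdef, norm_smul]
        calc ‖-σ‖ * ‖gradv d x‖ = |σ| * ‖gradv d x‖ := by rw [norm_neg, Real.norm_eq_abs]
          _ ≤ 1 * 1 := by rw [hσabs]; exact mul_le_mul_of_nonneg_left hgnorm zero_le_one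
          _ = 1 := one_mul 1
      have hdistv : ∀ s : ℝ, 0 ≤ s → dist (x + s • v) x ≤ s := by
        intro s hs
        rw [dist_eq_norm, add_sub_cancel_left, norm_smul, Real.norm_eq_abs, abs_of_nonneg hs]
        calc s * ‖v‖ ≤ s * 1 := mul_le_mul_of_nonneg_left hvnorm hs
          _ = s := mul_one s
      have hmemK : ∀ s ∈ Set.Icc (0:ℝ) s₀, x + s • v ∈ K := by
        intro s hs
        show Metric.infDist _ Γ ≤ ε
        obtain ⟨p, hp, hdist⟩ := hnear x
        calc Metric.infDist (x + s • v) Γ ≤ dist (x + s • v) x + dist x p :=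
              infDist_triangle3 x (x + s • v) Γ p hp
          _ ≤ s₀ + ε/2 := add_le_add (le_trans (hdistv s hs.1) hs.2)
              (by rw [← hdist]; exact hx)
          _ ≤ ε := by linarith
      set F : ℝ → ℝ := fun s => σ * d (x + s • v) with hFdef
      have hFderiv : ∀ s : ℝ, x + s • v ∈ U →
          HasDerivAt F (-(gradv d x ⬝ᵥ gradv d (x + s • v))) s := by
        intro s hs
        have hinner : HasDerivAt (fun s : ℝ => x + s • v) v s := by
          have h1 : HasDerivAt (fun s : ℝ => s • v) ((1:ℝ) • v) s := (hasDerivAt_id s).smul_const v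
          rw [one_smul] at h1
          exact h1.const_add x
        have hdd : DifferentiableAt ℝ d (x + s • v) :=
          (hd.differentiableOn (by norm_num)).differentiableAt (hU.mem_nhds hs)
        have h2 := (hdd.hasFDerivAt.comp_hasDerivAt s hinner).const_mul σ
        convert h2 using 1
        · rfl
        · rfl
        · rfl
        rw [fderiv_apply_eq_dot, hvdef, smul_dotProduct]
        show -(gradv d x ⬝ᵥ gradv d (x + s • v)) = σ * (-σ • (gradv d x ⬝ᵥ gradv d (x + s • v)))
        rw [smul_eq_mul]
        linear_combination (gradv d x ⬝ᵥ gradv d (x + s • v)) * hσσ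
      have hFbound : ∀ s ∈ Set.Icc (0:ℝ) s₀,
          -(gradv d x ⬝ᵥ gradv d (x + s • v)) ≤ -(1/2) := by
        intro s hs
        have hyK : x + s • v ∈ K := hmemK s hs
        have hdistxy : dist x (x + s • v) < s₁ := by
          rw [dist_comm]
          exact lt_of_le_of_lt (le_trans (hdistv s hs.1) hs.2) hs₀s₁
        have huc := hs₁ x hxK (x + s • v) hyK hdistxy
        have hsplit : gradv d x ⬝ᵥ gradv d (x + s • v)
            = 1 + gradv d x ⬝ᵥ (gradv d (x + s • v) - gradv d x) := by
          rw [dotProduct_sub, hunit x hxU]; ring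
        have hnd : ‖gradv d (x + s • v) - gradv d x‖ ≤ 1/6 := by
          rw [← dist_eq_norm, dist_comm]
          exact le_of_lt huc
        have habs : |gradv d x ⬝ᵥ (gradv d (x + s • v) - gradv d x)| ≤ 3 * (1 * (1/6)) := by
          calc |gradv d x ⬝ᵥ (gradv d (x + s • v) - gradv d x)|
              ≤ 3 * ‖gradv d x‖ * ‖gradv d (x + s • v) - gradv d x‖ := abs_dot_le3 _ _
            _ ≤ 3 * (1 * (1/6)) := by
                rw [mul_assoc]
                refine mul_le_mul_of_nonneg_left ?_ (by norm_num)
                exact mul_le_mul hgnorm hnd (norm_nonneg _) zero_le_one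
        rw [hsplit]
        have := abs_le.1 habs
        linarith [this.1]
      set G : ℝ → ℝ := fun s => F s + s / 2 with hGdef
      have hGanti : AntitoneOn G (Set.Icc 0 s₀) := by
        apply antitoneOn_of_deriv_nonpos (convex_Icc 0 s₀)
        · intro s hs
          exact (((hFderiv s (hKU (hmemK s hs))).add
            ((hasDerivAt_id s).div_const 2)).continuousAt).continuousWithinAt
        · intro s hs
          rw [interior_Icc] at hs
          have hs' : s ∈ Set.Icc (0:ℝ) s₀ := Set.mem_Icc_of_Ioo hs
          exact (((hFderiv s (hKU (hmemK s hs'))).add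
            ((hasDerivAt_id s).div_const 2)).differentiableAt).differentiableWithinAt
        · intro s hs
          rw [interior_Icc] at hs
          have hs' : s ∈ Set.Icc (0:ℝ) s₀ := Set.mem_Icc_of_Ioo hs
          have hG : HasDerivAt G (-(gradv d x ⬝ᵥ gradv d (x + s • v)) + 1/2) s :=
            (hFderiv s (hKU (hmemK s hs'))).add ((hasDerivAt_id s).div_const 2)
          rw [hG.deriv]
          linarith [hFbound s hs']
      have hdxpos : 0 < |d x| := abs_pos.2 hd0
      have hsstar : 2 * |d x| ∈ Set.Icc (0:ℝ) s₀ := ⟨by positivity, by linarith⟩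
      have h0mem : (0:ℝ) ∈ Set.Icc (0:ℝ) s₀ := ⟨le_refl _, le_of_lt hs₀pos⟩
      have hGle := hGanti h0mem hsstar (by positivity)
      have hF0 : F 0 = |d x| := by
        rw [hFdef]
        show σ * d (x + (0:ℝ) • v) = |d x|
        rw [zero_smul, add_zero]; exact hσd
      have hFstar : F (2 * |d x|) ≤ 0 := by
        have h1 : G (2 * |d x|) ≤ G 0 := hGle
        rw [hGdef] at h1
        simp only at h1
        rw [hF0] at h1
        linarith
      have hFcont : ContinuousOn F (Set.Icc 0 (2 * |d x|)) := by
        intro s hs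
        have hs' : s ∈ Set.Icc (0:ℝ) s₀ := ⟨hs.1, le_trans hs.2 hsstar.2⟩
        exact ((hFderiv s (hKU (hmemK s hs'))).continuousAt).continuousWithinAt
      have hIVT := intermediate_value_Icc' (by positivity : (0:ℝ) ≤ 2 * |d x|) hFcont
      have h0img : (0:ℝ) ∈ Set.Icc (F (2 * |d x|)) (F 0) := ⟨hFstar, by rw [hF0]; positivity⟩
      obtain ⟨s', hs'mem, hFs'⟩ := hIVT h0img
      have hσne : σ ≠ 0 := by
        intro h'; rw [h'] at hσabs; simp at hσabs
      have hds' : d (x + s' • v) = 0 := by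
        have h' : σ * d (x + s' • v) = 0 := hFs'
        rcases mul_eq_zero.1 h' with h'' | h''
        · exact absurd h'' hσne
        · exact h''
      have hs'range : s' ∈ Set.Icc (0:ℝ) s₀ := ⟨hs'mem.1, le_trans hs'mem.2 hsstar.2⟩
      have hs'K : x + s' • v ∈ K := hmemK s' hs'range
      have hmemΓ : x + s' • v ∈ Γ := by rw [hΓ]; exact ⟨hKU hs'K, hds'⟩
      calc Metric.infDist x Γ ≤ dist x (x + s' • v) := Metric.infDist_le_dist_of_mem hmemΓ
        _ = dist (x + s' • v) x := dist_comm _ _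
        _ ≤ s' := hdistv s' hs'mem.1
        _ ≤ 2 * |d x| := hs'mem.2
  -- chain rule
  have hfd : ∀ t : ℝ, c t ∈ U → HasDerivAt (fun s => d (c s)) (h (c t)) t := by
    intro t ht
    have hdd : DifferentiableAt ℝ d (c t) :=
      (hd.differentiableOn (by norm_num)).differentiableAt (hU.mem_nhds ht)
    have h2 := hdd.hasFDerivAt.comp_hasDerivAt t (hc t)
    rwa [fderiv_apply_eq_dot] at h2
  have hcont : Continuous c := continuous_iff_continuousAt.2 fun t => (hc t).continuousAt
  set S := {t : ℝ | c t ∈ Γ} with hSdef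
  have hScl : IsClosed S := hΓcl.preimage hcont
  have hSopen : IsOpen S := by
    rw [Metric.isOpen_iff]
    intro t₀ ht₀
    set W := {x : Fin 3 → ℝ | x ∈ U ∧ Metric.infDist x Γ < ε/2 ∧ |d x| < s₀/2} with hWdef
    have hWopen : IsOpen W := by
      have h1 : IsOpen {x : Fin 3 → ℝ | Metric.infDist x Γ < ε/2} :=
        isOpen_lt (Metric.continuous_infDist_pt Γ) continuous_const
      have h2 : IsOpen (U ∩ d ⁻¹' Metric.ball 0 (s₀/2)) :=
        ContinuousOn.isOpen_inter_preimage hd.continuousOn hU Metric.isOpen_ball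
      have : W = (U ∩ d ⁻¹' Metric.ball 0 (s₀/2)) ∩ {x | Metric.infDist x Γ < ε/2} := by
        ext x
        simp only [hWdef, Set.mem_setOf_eq, Set.mem_inter_iff, Set.mem_preimage,
          Metric.mem_ball, Real.dist_eq, sub_zero]
        tauto
      rw [this]
      exact h2.inter h1
    have hWsub : ∀ x ∈ W, x ∈ U := fun x hx => hx.1
    have hWΓ : ∀ x ∈ W, d x = 0 → x ∈ Γ := fun x hx hdx => by rw [hΓ]; exact ⟨hx.1, hdx⟩
    have hWbound : ∀ x ∈ W, |h x| ≤ (2*C) * |d x| := by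
      intro x hx
      have hxK : x ∈ K := le_trans (le_of_lt hx.2.1) (by show ε/2 ≤ ε; linarith)
      calc |h x| ≤ C * Metric.infDist x Γ := hL1 x hxK
        _ ≤ C * (2 * |d x|) :=
            mul_le_mul_of_nonneg_left (hL2 x (le_of_lt hx.2.1) (le_of_lt hx.2.2)) hCpos
        _ = (2*C) * |d x| := by ring
    have hcW : c t₀ ∈ W := by
      have e1 : Metric.infDist (c t₀) Γ = 0 := Metric.infDist_zero_of_mem ht₀
      have e2 : d (c t₀) = 0 := hΓd (c t₀) ht₀
      exact ⟨hΓU ht₀, by rw [e1]; linarith, by rw [e2]; simp; linarith⟩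
    have hnhds : c ⁻¹' W ∈ nhds t₀ := hcont.continuousAt.preimage_mem_nhds (hWopen.mem_nhds hcW)
    obtain ⟨ρ, hρpos, hρ⟩ := Metric.mem_nhds_iff.1 hnhds
    refine ⟨ρ/2, by linarith, ?_⟩
    intro t ht
    have hWs : ∀ s : ℝ, |s - t₀| ≤ |t - t₀| → c s ∈ W := by
      intro s hs
      apply hρ
      rw [Metric.mem_ball, Real.dist_eq]
      rw [Metric.mem_ball, Real.dist_eq] at ht
      linarith
    show c t ∈ Γ
    rcases le_total t₀ t with hle | hle
    · -- forward Gronwall on [t₀, t]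
      set f : ℝ → ℝ := fun s => d (c s) with hfdef
      have hmemW : ∀ s ∈ Set.Icc t₀ t, c s ∈ W := by
        intro s hs
        apply hWs
        rw [abs_of_nonneg (by linarith [hs.1] : (0:ℝ) ≤ s - t₀),
          abs_of_nonneg (by linarith : (0:ℝ) ≤ t - t₀)]
        linarith [hs.2]
      have hcont' : ContinuousOn f (Set.Icc t₀ t) := fun s hs =>
        ((hfd s (hWsub _ (hmemW s hs))).continuousAt).continuousWithinAt
      have hderiv' : ∀ s ∈ Set.Ico t₀ t, HasDerivWithinAt f (h (c s)) (Set.Ici s) s :=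
        fun s hs => ((hfd s (hWsub _ (hmemW s (Set.mem_Icc_of_Ico hs)))).hasDerivWithinAt)
      have hbound' : ∀ s ∈ Set.Ico t₀ t, ‖h (c s)‖ ≤ (2*C) * ‖f s‖ + 0 := by
        intro s hs
        rw [add_zero, Real.norm_eq_abs, Real.norm_eq_abs]
        exact hWbound (c s) (hmemW s (Set.mem_Icc_of_Ico hs))
      have ha' : ‖f t₀‖ ≤ 0 := by
        rw [Real.norm_eq_abs]
        have : f t₀ = 0 := hΓd (c t₀) ht₀
        rw [this]; simp
      have hgr := norm_le_gronwallBound_of_norm_deriv_right_le hcont' hderiv' ha' hbound'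
        t (Set.right_mem_Icc.2 hle)
      rw [gronwallBound_ε0] at hgr
      simp only [zero_mul] at hgr
      have hft : f t = 0 := by
        have := norm_nonneg (f t)
        have h2 : ‖f t‖ ≤ 0 := by simpa using hgr
        have : ‖f t‖ = 0 := le_antisymm h2 (norm_nonneg _)
        simpa using this
      exact hWΓ (c t) (hmemW t (Set.right_mem_Icc.2 hle)) hft
    · -- backward: consider g τ = d (c (t₀ - τ)) on [0, t₀ - t]
      set g : ℝ → ℝ := fun τ => d (c (t₀ - τ)) with hgdef
      have hmemW : ∀ τ ∈ Set.Icc (0:ℝ) (t₀ - t), c (t₀ - τ) ∈ W := by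
        intro τ hτ
        apply hWs
        rw [show t₀ - τ - t₀ = -τ by ring, abs_neg,
          abs_of_nonneg hτ.1, abs_of_nonpos (by linarith : t - t₀ ≤ 0)]
        linarith [hτ.2]
      have hgd : ∀ τ : ℝ, c (t₀ - τ) ∈ U → HasDerivAt g (-h (c (t₀ - τ))) τ := by
        intro τ hτ
        have hrev : HasDerivAt (fun τ : ℝ => t₀ - τ) (-1) τ := (hasDerivAt_id τ).const_sub t₀
        have hcc : HasDerivAt (fun τ : ℝ => c (t₀ - τ))
            ((-1:ℝ) • (cross3 a (c (t₀ - τ)) + b)) τ := (hc (t₀ - τ)).scomp τ hrev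
        have hdd : DifferentiableAt ℝ d (c (t₀ - τ)) :=
          (hd.differentiableOn (by norm_num)).differentiableAt (hU.mem_nhds hτ)
        have h2 := hdd.hasFDerivAt.comp_hasDerivAt τ hcc
        have e : (fderiv ℝ d (c (t₀ - τ))) ((-1:ℝ) • (cross3 a (c (t₀ - τ)) + b))
            = -h (c (t₀ - τ)) := by
          rw [_root_.map_smul, fderiv_apply_eq_dot]
          simp [hh_def]
        rwa [e] at h2
      have hcont' : ContinuousOn g (Set.Icc 0 (t₀ - t)) := fun τ hτ =>
        ((hgd τ (hWsub _ (hmemW τ hτ))).continuousAt).continuousWithinAt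
      have hderiv' : ∀ τ ∈ Set.Ico (0:ℝ) (t₀ - t),
          HasDerivWithinAt g (-h (c (t₀ - τ))) (Set.Ici τ) τ :=
        fun τ hτ => (hgd τ (hWsub _ (hmemW τ (Set.mem_Icc_of_Ico hτ)))).hasDerivWithinAt
      have hbound' : ∀ τ ∈ Set.Ico (0:ℝ) (t₀ - t),
          ‖-h (c (t₀ - τ))‖ ≤ (2*C) * ‖g τ‖ + 0 := by
        intro τ hτ
        rw [add_zero, norm_neg, Real.norm_eq_abs, Real.norm_eq_abs]
        exact hWbound (c (t₀ - τ)) (hmemW τ (Set.mem_Icc_of_Ico hτ))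
      have ha' : ‖g 0‖ ≤ 0 := by
        rw [Real.norm_eq_abs]
        have e : g 0 = 0 := by
          rw [hgdef]
          show d (c (t₀ - 0)) = 0
          rw [sub_zero]
          exact hΓd (c t₀) ht₀
        rw [e]; simp
      have hgr := norm_le_gronwallBound_of_norm_deriv_right_le hcont' hderiv' ha' hbound'
        (t₀ - t) (Set.right_mem_Icc.2 (by linarith))
      rw [gronwallBound_ε0] at hgr
      simp only [zero_mul] at hgr
      have hgt : g (t₀ - t) = 0 := by
        have h2 : ‖g (t₀ - t)‖ ≤ 0 := by simpa using hgr
        have : ‖g (t₀ - t)‖ = 0 := le_antisymm h2 (norm_nonneg _)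
        simpa using this
      have : c t ∈ W := by
        have := hmemW (t₀ - t) (Set.right_mem_Icc.2 (by linarith))
        rwa [show t₀ - (t₀ - t) = t by ring] at this
      apply hWΓ (c t) this
      have := hgt
      rw [hgdef] at this
      simpa [show t₀ - (t₀ - t) = t by ring] using this
  have hSuniv : S = Set.univ := IsClopen.eq_univ ⟨hScl, hSopen⟩ ⟨0, h0⟩
  exact fun t => Set.eq_univ_iff_forall.1 hSuniv t

end Reg

lemma cross3_zero_right (u : Fin 3 → ℝ) : cross3 u 0 = 0 := by
  apply vec3_ext <;> simp [c30, c31, c32]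

lemma linear_bounded_zero {K M : ℝ} (h : ∀ t : ℝ, |t| * |K| ≤ M) : K = 0 := by
  by_contra hK
  have hM : 0 ≤ M := le_trans (by simp) (h 0)
  have hKpos : 0 < |K| := abs_pos.2 hK
  have := h ((M + 1) / |K|)
  rw [abs_of_nonneg (by positivity : (0:ℝ) ≤ (M + 1) / |K|), div_mul_cancel₀ _ (ne_of_gt hKpos)] at this
  linarith

lemma span3_zero (u zp rr : Fin 3 → ℝ) (huu : u ⬝ᵥ u = 1) (hzpu : zp ⬝ᵥ u = 0)
    (hq : zp ⬝ᵥ zp ≠ 0) (hru : rr ⬝ᵥ u = 0) (hrzp : rr ⬝ᵥ zp = 0)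
    (hrw : rr ⬝ᵥ cross3 u zp = 0) : rr = 0 := by
  have h1 : cross3 (cross3 u zp) rr = 0 := by
    rw [cross3_bac]
    have e1 : u ⬝ᵥ rr = 0 := by rw [dotProduct_comm]; exact hru
    have e2 : zp ⬝ᵥ rr = 0 := by rw [dotProduct_comm]; exact hrzp
    rw [e1, e2]; module
  have hL := cross3_lagrange (cross3 u zp) rr
  rw [h1] at hL
  have hww : cross3 u zp ⬝ᵥ cross3 u zp = zp ⬝ᵥ zp := by
    rw [cross3_lagrange, huu]
    have : u ⬝ᵥ zp = 0 := by rw [dotProduct_comm]; exact hzpu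
    rw [this]; ring
  have hwr : cross3 u zp ⬝ᵥ rr = 0 := by rw [dotProduct_comm]; exact hrw
  rw [hww, hwr] at hL
  have h0 : (0:Fin 3 → ℝ) ⬝ᵥ (0:Fin 3 → ℝ) = 0 := by simp
  rw [h0] at hL
  have : rr ⬝ᵥ rr = 0 := by
    rcases mul_eq_zero.1 (by linarith [hL] : (zp ⬝ᵥ zp) * (rr ⬝ᵥ rr) = 0) with h' | h'
    · exact absurd h' hq
    · exact h'
  exact dot_self_eq_zero3 this

lemma mulVec_dot_preserve (R : Matrix (Fin 3) (Fin 3) ℝ) (hR : Rᵀ * R = 1)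
    (x y : Fin 3 → ℝ) : R.mulVec x ⬝ᵥ R.mulVec y = x ⬝ᵥ y := by
  rw [Matrix.dotProduct_mulVec, ← Matrix.mulVec_transpose, Matrix.mulVec_mulVec, hR,
    Matrix.one_mulVec]

lemma flow_curve (a b y : Fin 3 → ℝ) (r μ : ℝ) (u p z zu zp w' : Fin 3 → ℝ)
    (hr : 0 < r) (hrr : r * r = a ⬝ᵥ a) (hu : u = r⁻¹ • a)
    (hμ : μ = (a ⬝ᵥ b) / (a ⬝ᵥ a))
    (hp : p = (a ⬝ᵥ a)⁻¹ • cross3 a b)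
    (hz : z = y - p) (hzu : zu = (z ⬝ᵥ u) • u) (hzp : zp = z - zu) (hw : w' = cross3 u zp) :
    (p + ((0:ℝ) * μ) • a + Real.cos (0 * r) • zp + Real.sin (0 * r) • w' + zu = y) ∧
    ∀ t : ℝ, HasDerivAt
      (fun t : ℝ => p + (t * μ) • a + Real.cos (t * r) • zp + Real.sin (t * r) • w' + zu)
      (cross3 a (p + (t * μ) • a + Real.cos (t * r) • zp + Real.sin (t * r) • w' + zu) + b) t := by
  have hrne : r ≠ 0 := ne_of_gt hr
  have haa : a ⬝ᵥ a ≠ 0 := by rw [← hrr]; positivity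
  have ha' : a = r • u := by rw [hu, smul_smul, mul_inv_cancel₀ hrne, one_smul]
  have huu : u ⬝ᵥ u = 1 := by
    rw [hu, smul_dotProduct, dotProduct_smul, ← hrr, smul_eq_mul, smul_eq_mul]
    field_simp
  have hzuu : zu ⬝ᵥ u = z ⬝ᵥ u := by
    rw [hzu, smul_dotProduct, huu, smul_eq_mul, mul_one]
  have hzpu : zp ⬝ᵥ u = 0 := by
    rw [hzp, sub_dotProduct, hzuu, sub_self]
  have huzp : u ⬝ᵥ zp = 0 := by rw [dotProduct_comm]; exact hzpu
  have hcau : cross3 a u = 0 := by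
    rw [ha', cross3_smul_left, cross3_self, smul_zero]
  have hcazu : cross3 a zu = 0 := by
    rw [hzu, cross3_smul_right, hcau, smul_zero]
  have hcazp : cross3 a zp = r • w' := by rw [ha', cross3_smul_left, hw]
  have hcaw : cross3 a w' = (-r) • zp := by
    rw [ha', cross3_smul_left, hw, cross3_triple, huzp, huu]
    module
  have hcp : cross3 a p = μ • a - b := by
    have haa' : a 0 * a 0 + a 1 * a 1 + a 2 * a 2 ≠ 0 := by rw [← dot3]; exact haa
    rw [hp, hμ, cross3_smul_right, cross3_triple]
    match_scalars <;> field_simp <;> try ring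
  -- key identity
  have hkey : ∀ t : ℝ,
      cross3 a (p + (t * μ) • a + Real.cos (t * r) • zp + Real.sin (t * r) • w' + zu) + b
      = μ • a + (-Real.sin (t * r) * r) • zp + (Real.cos (t * r) * r) • w' := by
    intro t
    rw [cross3_add_right, cross3_add_right, cross3_add_right, cross3_add_right,
      cross3_smul_right, cross3_smul_right, cross3_smul_right, cross3_self, hcazu,
      hcazp, hcaw, hcp]
    module
  constructor
  · rw [zero_mul, zero_mul, Real.cos_zero, Real.sin_zero, zero_smul, one_smul, zero_smul, hzp, hz]
    module
  · intro t
    rw [hkey t]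
    apply hasDerivAt_pi.2
    intro i
    have h2 : HasDerivAt (fun s : ℝ => (s * μ) * a i) (μ * a i) t := by
      simpa using (hasDerivAt_mul_const μ).mul_const (a i)
    have h3 : HasDerivAt (fun s : ℝ => s * r) r t := hasDerivAt_mul_const r
    have h4 : HasDerivAt (fun s : ℝ => Real.cos (s * r)) (-Real.sin (t * r) * r) t :=
      h3.cos
    have h5 : HasDerivAt (fun s : ℝ => Real.sin (s * r)) (Real.cos (t * r) * r) t :=
      h3.sin
    have h6 := ((((hasDerivAt_const t (p i)).add h2).add (h4.mul_const (zp i))).add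
      (h5.mul_const (w' i))).add_const (zu i)
    convert h6 using 1
    simp only [Pi.add_apply, Pi.smul_apply, smul_eq_mul]
    simp only [Pi.add_apply, Pi.smul_apply, smul_eq_mul]
    ring

lemma stepB (a b : Fin 3 → ℝ) (r μ : ℝ) (u p zu zp w' : Fin 3 → ℝ) (M : ℝ)
    (haa : 0 < a ⬝ᵥ a) (hμ : μ = (a ⬝ᵥ b) / (a ⬝ᵥ a))
    (hbound : ∀ t : ℝ,
      ‖p + (t * μ) • a + Real.cos (t * r) • zp + Real.sin (t * r) • w' + zu‖ ≤ M) :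
    a ⬝ᵥ b = 0 := by
  have hexp : ∀ t : ℝ,
      a ⬝ᵥ (p + (t * μ) • a + Real.cos (t * r) • zp + Real.sin (t * r) • w' + zu)
      = (a ⬝ᵥ p) + t * (μ * (a ⬝ᵥ a)) + Real.cos (t * r) * (a ⬝ᵥ zp)
        + Real.sin (t * r) * (a ⬝ᵥ w') + (a ⬝ᵥ zu) := by
    intro t
    rw [dotProduct_add, dotProduct_add, dotProduct_add,
      dotProduct_add, dotProduct_smul, dotProduct_smul,
      dotProduct_smul, smul_eq_mul, smul_eq_mul, smul_eq_mul]
    ring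
  have habs_sub : ∀ A B C D E : ℝ, |A - B - C - D - E| ≤ |A| + |B| + |C| + |D| + |E| := by
    intro A B C D E
    calc |A - B - C - D - E| ≤ |A - B - C - D| + |E| := abs_sub _ _
      _ ≤ (|A - B - C| + |D|) + |E| := by gcongr; exact abs_sub _ _
      _ ≤ ((|A - B| + |C|) + |D|) + |E| := by gcongr; exact abs_sub _ _
      _ ≤ (((|A| + |B|) + |C|) + |D|) + |E| := by gcongr; exact abs_sub _ _
      _ = |A| + |B| + |C| + |D| + |E| := by ring
  have hK : μ * (a ⬝ᵥ a) = 0 := by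
    apply linear_bounded_zero (M := 3 * ‖a‖ * M + |a ⬝ᵥ p| + |a ⬝ᵥ zp| + |a ⬝ᵥ w'| + |a ⬝ᵥ zu|)
    intro t
    set x := p + (t * μ) • a + Real.cos (t * r) • zp + Real.sin (t * r) • w' + zu with hx
    have h1 : |a ⬝ᵥ x| ≤ 3 * ‖a‖ * M := by
      calc |a ⬝ᵥ x| ≤ 3 * ‖a‖ * ‖x‖ := abs_dot_le3 a x
        _ ≤ 3 * ‖a‖ * M := by
            apply mul_le_mul_of_nonneg_left (hbound t) (by positivity)
    have e : t * (μ * (a ⬝ᵥ a)) = (a ⬝ᵥ x) - (a ⬝ᵥ p) - Real.cos (t * r) * (a ⬝ᵥ zp)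
        - Real.sin (t * r) * (a ⬝ᵥ w') - (a ⬝ᵥ zu) := by
      rw [hx, hexp t]; ring
    calc |t| * |μ * (a ⬝ᵥ a)| = |t * (μ * (a ⬝ᵥ a))| := (abs_mul _ _).symm
      _ ≤ |a ⬝ᵥ x| + |a ⬝ᵥ p| + |Real.cos (t * r) * (a ⬝ᵥ zp)|
          + |Real.sin (t * r) * (a ⬝ᵥ w')| + |a ⬝ᵥ zu| := by rw [e]; exact habs_sub _ _ _ _ _
      _ ≤ 3 * ‖a‖ * M + |a ⬝ᵥ p| + |a ⬝ᵥ zp| + |a ⬝ᵥ w'| + |a ⬝ᵥ zu| := by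
          have hc : |Real.cos (t * r) * (a ⬝ᵥ zp)| ≤ |a ⬝ᵥ zp| := by
            rw [abs_mul]
            calc |Real.cos (t * r)| * |a ⬝ᵥ zp| ≤ 1 * |a ⬝ᵥ zp| :=
                  mul_le_mul_of_nonneg_right (Real.abs_cos_le_one _) (abs_nonneg _)
              _ = |a ⬝ᵥ zp| := one_mul _
          have hs : |Real.sin (t * r) * (a ⬝ᵥ w')| ≤ |a ⬝ᵥ w'| := by
            rw [abs_mul]
            calc |Real.sin (t * r)| * |a ⬝ᵥ w'| ≤ 1 * |a ⬝ᵥ w'| :=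
                  mul_le_mul_of_nonneg_right (Real.abs_sin_le_one _) (abs_nonneg _)
              _ = |a ⬝ᵥ w'| := one_mul _
          linarith [h1, hc, hs]
  rw [hμ, div_mul_cancel₀ _ (ne_of_gt haa)] at hK
  exact hK

lemma stepC (a b y : Fin 3 → ℝ) (r μ : ℝ) (u p z zu zp w' : Fin 3 → ℝ)
    (hr : 0 < r) (hrr : r * r = a ⬝ᵥ a) (hu : u = r⁻¹ • a)
    (hμ0 : μ = 0)
    (hz : z = y - p) (hzu : zu = (z ⬝ᵥ u) • u) (hzp : zp = z - zu) (hw : w' = cross3 u zp)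
    (R : Matrix (Fin 3) (Fin 3) ℝ) (hRtR : Rᵀ * R = 1) (hRa : R.mulVec a = a) :
    ∃ t₀ : ℝ, p + R.mulVec (y - p)
      = p + (t₀ * μ) • a + Real.cos (t₀ * r) • zp + Real.sin (t₀ * r) • w' + zu := by
  have hrne : r ≠ 0 := ne_of_gt hr
  have huu : u ⬝ᵥ u = 1 := by
    rw [hu, smul_dotProduct, dotProduct_smul, ← hrr, smul_eq_mul, smul_eq_mul]
    field_simp
  have hzuu : zu ⬝ᵥ u = z ⬝ᵥ u := by
    rw [hzu, smul_dotProduct, huu, smul_eq_mul, mul_one]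
  have hzpu : zp ⬝ᵥ u = 0 := by
    rw [hzp, sub_dotProduct, hzuu, sub_self]
  have huzp : u ⬝ᵥ zp = 0 := by rw [dotProduct_comm]; exact hzpu
  have hdotp := mulVec_dot_preserve R hRtR
  have hRu : R.mulVec u = u := by rw [hu, Matrix.mulVec_smul, hRa]
  have hzsplit : z = zu + zp := by rw [hzp]; module
  by_cases hzp0 : zp = 0
  · refine ⟨0, ?_⟩
    have hRz : R.mulVec (y - p) = z := by
      rw [← hz, hzsplit, hzp0, add_zero, hzu, Matrix.mulVec_smul, hRu]
    rw [hRz, hzp0, hzsplit, hzp0, hw, hzp0, cross3_zero_right]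
    simp
  · have hq : zp ⬝ᵥ zp ≠ 0 := fun h => hzp0 (dot_self_eq_zero3 h)
    have hw'u : w' ⬝ᵥ u = 0 := by rw [hw]; exact cross3_dot_left u zp
    have hw'zp : w' ⬝ᵥ zp = 0 := by rw [hw]; exact cross3_dot_right u zp
    have hzpw' : zp ⬝ᵥ w' = 0 := by rw [dotProduct_comm]; exact hw'zp
    have hw'w' : w' ⬝ᵥ w' = zp ⬝ᵥ zp := by
      rw [hw, cross3_lagrange, huu, huzp]; ring
    set α := (R.mulVec zp ⬝ᵥ zp) / (zp ⬝ᵥ zp) with hα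
    set β := (R.mulVec zp ⬝ᵥ w') / (zp ⬝ᵥ zp) with hβ
    have hRzpu : R.mulVec zp ⬝ᵥ u = 0 := by
      calc R.mulVec zp ⬝ᵥ u = R.mulVec zp ⬝ᵥ R.mulVec u := by rw [hRu]
        _ = zp ⬝ᵥ u := hdotp _ _
        _ = 0 := hzpu
    have hrr0 : R.mulVec zp - α • zp - β • w' = 0 := by
      apply span3_zero u zp _ huu hzpu hq
      · rw [sub_dotProduct, sub_dotProduct, smul_dotProduct,
          smul_dotProduct, hRzpu, hzpu, hw'u]
        simp
      · simp only [sub_dotProduct, smul_dotProduct, smul_eq_mul, hw'zp,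
          mul_zero, sub_zero]
        rw [hα, div_mul_cancel₀ _ hq, sub_self]
      · rw [← hw]
        simp only [sub_dotProduct, smul_dotProduct, smul_eq_mul, hzpw', hw'w',
          mul_zero, sub_zero]
        rw [hβ, div_mul_cancel₀ _ hq, sub_self]
    have hRzp : R.mulVec zp = α • zp + β • w' := by
      rw [sub_sub] at hrr0
      exact sub_eq_zero.1 hrr0
    have hαβ : α * α + β * β = 1 := by
      have h1 : zp ⬝ᵥ zp = R.mulVec zp ⬝ᵥ R.mulVec zp := (hdotp zp zp).symm
      have h2 : zp ⬝ᵥ zp = (α * α + β * β) * (zp ⬝ᵥ zp) := by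
        nth_rewrite 1 [h1]
        rw [hRzp]
        simp only [add_dotProduct, dotProduct_add, smul_dotProduct,
          dotProduct_smul, smul_eq_mul, hzpw', hw'zp, hw'w']
        ring
      have h3 : (1 - (α * α + β * β)) * (zp ⬝ᵥ zp) = 0 := by linarith [h2]
      rcases mul_eq_zero.1 h3 with h' | h'
      · linarith
      · exact absurd h' hq
    set zc : ℂ := ⟨α, β⟩ with hzc
    have habs : ‖zc‖ = 1 := by
      rw [Complex.norm_def, Complex.normSq_mk, hαβ, Real.sqrt_one]
    have hzne : zc ≠ 0 := by
      intro h'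
      rw [h'] at habs
      simp at habs
    have hcos : Real.cos (Complex.arg zc) = α := by
      rw [Complex.cos_arg hzne, habs]
      simp [hzc]
    have hsin : Real.sin (Complex.arg zc) = β := by
      rw [Complex.sin_arg, habs]
      simp [hzc]
    refine ⟨Complex.arg zc / r, ?_⟩
    rw [div_mul_cancel₀ _ hrne, hcos, hsin, hμ0, mul_zero, zero_smul]
    have hRz : R.mulVec (y - p) = zu + (α • zp + β • w') := by
      rw [← hz, hzsplit, Matrix.mulVec_add, hzu, Matrix.mulVec_smul, hRu, hRzp, ← hzu]
    rw [hRz]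
    module


/-- Let `Γ` be a C² closed (compact), connected, oriented surface in ℝ³
(zero level set of a C² function `d` with `|∇d| = 1`, unit normal `n = ∇d`), and let
`w(x) = a × x + b` satisfy `w·n = 0` on `Γ` with `w ≢ 0`.  Then `a ≠ 0`, `a·b = 0`, and
`Γ` is invariant under every rotation about the line parallel to `a` through
`b_a = |a|⁻² (a × b)` (rotations about that line being the maps
`x ↦ b_a + R (x − b_a)` with `R ∈ SO(3)`, `R a = a`). -/
theorem stmt11
    (U : Set (Fin 3 → ℝ)) (hU : IsOpen U)
    (d : (Fin 3 → ℝ) → ℝ) (hd : ContDiffOn ℝ 2 d U)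
    (Γ : Set (Fin 3 → ℝ)) (hΓ : Γ = {x ∈ U | d x = 0})
    (hne : Γ.Nonempty) (hcomp : IsCompact Γ) (hconn : IsConnected Γ)
    (hunit : ∀ x ∈ U, gradv d x ⬝ᵥ gradv d x = 1)
    (a b : Fin 3 → ℝ)
    (htan : ∀ y ∈ Γ, (cross3 a y + b) ⬝ᵥ gradv d y = 0)
    (hw0 : ¬ ∀ x : Fin 3 → ℝ, cross3 a x + b = 0) :
    a ≠ 0 ∧ a ⬝ᵥ b = 0 ∧
      ∀ R : Matrix (Fin 3) (Fin 3) ℝ, Rᵀ * R = 1 → R.det = 1 → R.mulVec a = a →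
        ∀ y ∈ Γ,
          (a ⬝ᵥ a)⁻¹ • cross3 a b + R.mulVec (y - (a ⬝ᵥ a)⁻¹ • cross3 a b) ∈ Γ := by
  
  obtain ⟨y₀, hy₀⟩ := hne
  obtain ⟨M, hM⟩ := isBounded_iff_forall_norm_le.1 hcomp.isBounded
  -- Step A : a ≠ 0
  have hane : a ≠ 0 := by
    intro ha
    apply hw0
    subst ha
    have hflow : ∀ t : ℝ, HasDerivAt (fun t : ℝ => y₀ + t • b)
        (cross3 0 ((fun t : ℝ => y₀ + t • b) t) + b) t := by
      intro t
      have h1 : HasDerivAt (fun t : ℝ => t • b) ((1:ℝ) • b) t := (hasDerivAt_id t).smul_const b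
      rw [one_smul] at h1
      have h2 := h1.const_add y₀
      simpa [cross3_zero_left] using h2
    have h0 : (fun t : ℝ => y₀ + t • b) 0 ∈ Γ := by
      show y₀ + (0:ℝ) • b ∈ Γ
      rw [zero_smul, add_zero]
      exact hy₀
    have hinv := invariance hU hd Γ hΓ ⟨y₀, hy₀⟩ hcomp hunit 0 b htan _ hflow h0
    have hb0 : b = 0 := by
      funext i
      have hbound : ∀ t : ℝ, |t| * |b i| ≤ M + ‖y₀‖ := by
        intro t
        have h1 := hM _ (hinv t)
        have h2 : |y₀ i + t * b i| ≤ ‖y₀ + t • b‖ := by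
          have h3 := norm_le_pi_norm (y₀ + t • b) i
          simpa [Real.norm_eq_abs, smul_eq_mul] using h3
        have h4 : |y₀ i| ≤ ‖y₀‖ := by simpa using norm_le_pi_norm y₀ i
        have h5 : |t * b i| ≤ |y₀ i + t * b i| + |y₀ i| := by
          have := abs_sub (y₀ i + t * b i) (y₀ i)
          simpa using this
        calc |t| * |b i| = |t * b i| := (abs_mul _ _).symm
          _ ≤ |y₀ i + t * b i| + |y₀ i| := h5
          _ ≤ M + ‖y₀‖ := add_le_add (le_trans h2 h1) h4
      have := linear_bounded_zero hbound
      simpa using this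
    intro x
    rw [hb0, cross3_zero_left, add_zero]
  -- setup
  have haa : 0 < a ⬝ᵥ a := by
    rcases lt_or_eq_of_le (dot_self_nonneg3 a) with h | h
    · exact h
    · exact absurd (dot_self_eq_zero3 h.symm) hane
  set r := Real.sqrt (a ⬝ᵥ a) with hrdef
  have hr : 0 < r := Real.sqrt_pos.2 haa
  have hrr : r * r = a ⬝ᵥ a := Real.mul_self_sqrt (le_of_lt haa)
  set u : Fin 3 → ℝ := r⁻¹ • a with hu
  set μ : ℝ := (a ⬝ᵥ b) / (a ⬝ᵥ a) with hμ
  set p : Fin 3 → ℝ := (a ⬝ᵥ a)⁻¹ • cross3 a b with hp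
  have horbit : ∀ y ∈ Γ, ∀ t : ℝ,
      p + (t * μ) • a + Real.cos (t * r) • ((y - p) - ((y - p) ⬝ᵥ u) • u)
        + Real.sin (t * r) • cross3 u ((y - p) - ((y - p) ⬝ᵥ u) • u)
        + ((y - p) ⬝ᵥ u) • u ∈ Γ := by
    intro y hy t
    obtain ⟨hc0, hcd⟩ := flow_curve a b y r μ u p (y - p) (((y - p) ⬝ᵥ u) • u)
      ((y - p) - ((y - p) ⬝ᵥ u) • u) (cross3 u ((y - p) - ((y - p) ⬝ᵥ u) • u))
      hr hrr hu hμ hp rfl rfl rfl rfl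
    have h0 : (fun t : ℝ => p + (t * μ) • a
        + Real.cos (t * r) • ((y - p) - ((y - p) ⬝ᵥ u) • u)
        + Real.sin (t * r) • cross3 u ((y - p) - ((y - p) ⬝ᵥ u) • u)
        + ((y - p) ⬝ᵥ u) • u) 0 ∈ Γ := by
      have h' := hy
      rw [← hc0] at h'
      exact h'
    exact invariance hU hd Γ hΓ ⟨y₀, hy₀⟩ hcomp hunit a b htan _ hcd h0 t
  -- Step B : a ⬝ᵥ b = 0
  have hab : a ⬝ᵥ b = 0 := by
    apply stepB a b r μ u p (((y₀ - p) ⬝ᵥ u) • u) ((y₀ - p) - ((y₀ - p) ⬝ᵥ u) • u)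
      (cross3 u ((y₀ - p) - ((y₀ - p) ⬝ᵥ u) • u)) M haa hμ
    intro t
    exact hM _ (horbit y₀ hy₀ t)
  refine ⟨hane, hab, ?_⟩
  intro R hRtR hRdet hRa y hy
  have hμ0 : μ = 0 := by rw [hμ, hab]; simp
  obtain ⟨t₀, ht₀⟩ := stepC a b y r μ u p (y - p) (((y - p) ⬝ᵥ u) • u)
    ((y - p) - ((y - p) ⬝ᵥ u) • u) (cross3 u ((y - p) - ((y - p) ⬝ᵥ u) • u))
    hr hrr hu hμ0 rfl rfl rfl rfl R hRtR hRa
  show p + R.mulVec (y - p) ∈ Γ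
  rw [ht₀]
  exact horbit y hy t₀
end
end

section
/- Let Γ be a C² closed surface, g₀, g₁ ∈ C¹(Γ) with g := g₁ − g₀ ≥ c > 0, and for ε ∈ (0,1] let Ω_ε = {y + r n(y) : y ∈ Γ, ε g₀(y) < r < ε g₁(y)}. Then for every p ∈ [1,∞) there is a constant C > 0 independent of ε and φ such that for all φ ∈ W^{1,p}(Ω_ε) and i = 0,1: ‖φ‖_{L^p(Ω_ε)} ≤ C (ε^{1/p} ‖φ‖_{L^p(Γ_ε^i)} + ε ‖∂_n φ‖_{L^p(Ω_ε)}) and ‖φ‖_{L^p(Γ_ε^i)} ≤ C (ε^{−1/p} ‖φ‖_{L^p(Ω_ε)} + ε^{1−1/p} ‖∂_n φ‖_{L^p(Ω_ε)}), where ∂_n φ = (n̄·∇)φ is the derivative in the normal direction of Γ and Γ_ε^i = {y + ε gᵢ(y) n(y) : y ∈ Γ}. -/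
open Matrix MeasureTheory
open scoped ENNReal

noncomputable section

/-- Hölder: `∫ f ≤ μ(s)^(1-1/p) (∫ f^p)^(1/p)`. -/
lemma aux_holder {p : ℝ} (hp : 1 ≤ p) {s : Set ℝ} (f : ℝ → ℝ≥0∞) (hf : Measurable f) :
    ∫⁻ r in s, f r ≤ (volume s) ^ (1 - 1/p) * (∫⁻ r in s, (f r) ^ p) ^ (1/p) := by
  rcases eq_or_lt_of_le hp with h1 | h1
  · simp only [← h1]
    simp [ENNReal.rpow_one]
  · have hpq : p.HolderConjugate (Real.conjExponent p) := .conjExponent h1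
    have := ENNReal.lintegral_mul_le_Lp_mul_Lq (volume.restrict s) hpq.symm
      (aemeasurable_const : AEMeasurable (fun _ : ℝ => (1:ℝ≥0∞)) _) hf.aemeasurable
    simp only [Pi.mul_apply, one_mul, ENNReal.one_rpow] at this
    calc ∫⁻ r in s, f r ≤ (∫⁻ _ in s, (1:ℝ≥0∞)) ^ (1 / Real.conjExponent p) *
          (∫⁻ r in s, (f r) ^ p) ^ (1/p) := this
      _ = (volume s) ^ (1 - 1/p) * (∫⁻ r in s, (f r) ^ p) ^ (1/p) := by
          rw [setLIntegral_const, one_mul]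
          congr 1
          rw [one_div, one_div, hpq.one_sub_inv]

lemma aux_pow2 {p : ℝ} (hp : 1 ≤ p) {x y z : ℝ≥0∞} (h : x ≤ y + z) :
    x ^ p ≤ 2 ^ p * (y ^ p + z ^ p) := by
  have hp0 : (0:ℝ) ≤ p := by linarith
  calc x ^ p ≤ (2 * (y ⊔ z)) ^ p := by
        refine ENNReal.rpow_le_rpow (h.trans ?_) hp0
        rw [two_mul]
        exact add_le_add le_sup_left le_sup_right
    _ = 2 ^ p * (y ⊔ z) ^ p := ENNReal.mul_rpow_of_nonneg _ _ hp0
    _ ≤ 2 ^ p * (y ^ p + z ^ p) := by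
        gcongr
        rcases le_total y z with hyz | hyz
        · rw [sup_eq_right.2 hyz]; exact le_add_self
        · rw [sup_eq_left.2 hyz]; exact le_self_add

lemma aux_split {p : ℝ} (hp : 1 ≤ p) {U₁ U₂ S D X C₁ C₂ : ℝ≥0∞}
    (h : X ≤ U₁ * S + U₂ * D) (h₁ : U₁ ^ (1/p) ≤ C₁) (h₂ : U₂ ^ (1/p) ≤ C₂) :
    X ^ (1/p) ≤ C₁ * S ^ (1/p) + C₂ * D ^ (1/p) := by
  have hq0 : (0:ℝ) ≤ 1/p := by positivity
  have hq1 : (1:ℝ)/p ≤ 1 := by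
    rw [div_le_one (by linarith)]; linarith
  calc X ^ (1/p) ≤ (U₁ * S + U₂ * D) ^ (1/p) := ENNReal.rpow_le_rpow h hq0
    _ ≤ (U₁ * S) ^ (1/p) + (U₂ * D) ^ (1/p) := ENNReal.rpow_add_le_add_rpow _ _ hq0 hq1
    _ = U₁ ^ (1/p) * S ^ (1/p) + U₂ ^ (1/p) * D ^ (1/p) := by
        rw [ENNReal.mul_rpow_of_nonneg _ _ hq0, ENNReal.mul_rpow_of_nonneg _ _ hq0]
    _ ≤ C₁ * S ^ (1/p) + C₂ * D ^ (1/p) := by gcongr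

lemma aux_ftc {h : ℝ → ℝ} {a b : ℝ}
    (hc : ContinuousOn h (Set.Icc a b)) (hd : ∀ r ∈ Set.Ioo a b, DifferentiableAt ℝ h r)
    {s r : ℝ} (hs : s ∈ Set.Icc a b) (hr : r ∈ Set.Icc a b) :
    ENNReal.ofReal |h r| ≤ ENNReal.ofReal |h s| +
      ∫⁻ t in Set.Ioo a b, ENNReal.ofReal |deriv h t| := by
  set G := ∫⁻ t in Set.Ioo a b, ENNReal.ofReal |deriv h t| with hGdef
  by_cases hG : G = ⊤
  · rw [hG]; simp
  have hdm : Measurable (deriv h) := measurable_deriv h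
  have hint : IntegrableOn (deriv h) (Set.Ioo a b) := by
    refine ⟨hdm.aestronglyMeasurable, ?_⟩
    rw [hasFiniteIntegral_iff_norm]
    simpa [Real.norm_eq_abs] using lt_top_iff_ne_top.2 hG
  have hintIcc : IntegrableOn (deriv h) (Set.Icc a b) :=
    (integrableOn_Icc_iff_integrableOn_Ioo).2 hint
  have habs : Integrable (fun t => |deriv h t|) (volume.restrict (Set.Ioo a b)) := hint.abs
  have hGR : ∫ t in Set.Ioo a b, |deriv h t| = G.toReal := by
    rw [hGdef, ← ofReal_integral_eq_lintegral_ofReal habs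
      (Filter.Eventually.of_forall fun t => abs_nonneg _)]
    rw [ENNReal.toReal_ofReal (integral_nonneg fun t => abs_nonneg _)]
  have key : ∀ u v : ℝ, u ∈ Set.Icc a b → v ∈ Set.Icc a b → u ≤ v →
      |h v - h u| ≤ G.toReal := by
    intro u v hu hv huv
    have hsub : Set.Icc u v ⊆ Set.Icc a b := Set.Icc_subset_Icc hu.1 hv.2
    have hii : IntervalIntegrable (deriv h) volume u v := by
      rw [intervalIntegrable_iff_integrableOn_Icc_of_le huv]
      exact hintIcc.mono_set hsub
    have hftc : ∫ x in u..v, deriv h x = h v - h u := by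
      refine intervalIntegral.integral_eq_sub_of_hasDeriv_right_of_le huv
        (hc.mono hsub) (fun x hx => ?_) hii
      exact ((hd x ⟨lt_of_le_of_lt hu.1 hx.1, lt_of_lt_of_le hx.2 hv.2⟩).hasDerivAt).hasDerivWithinAt
    rw [← hftc]
    calc |∫ x in u..v, deriv h x| ≤ ∫ x in u..v, |deriv h x| :=
          intervalIntegral.abs_integral_le_integral_abs huv
      _ = ∫ x in Set.Ioo u v, |deriv h x| := by
          rw [intervalIntegral.integral_of_le huv, integral_Ioc_eq_integral_Ioo]
      _ ≤ ∫ x in Set.Ioo a b, |deriv h x| := by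
          refine setIntegral_mono_set habs
            (Filter.Eventually.of_forall fun t => abs_nonneg _)
            (Filter.Eventually.of_forall ?_)
          intro x hx
          exact ⟨lt_of_le_of_lt hu.1 hx.1, lt_of_lt_of_le hx.2 hv.2⟩
      _ = G.toReal := hGR
  have hkey : |h r| ≤ |h s| + G.toReal := by
    rcases le_total s r with hsr | hrs
    · have h1 := key s r hs hr hsr
      have h2 := abs_add_le (h s) (h r - h s)
      simp only [add_sub_cancel] at h2
      linarith
    · have h1 := key r s hr hs hrs
      have h2 := abs_add_le (h s) (h r - h s)
      simp only [add_sub_cancel] at h2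
      have h3 : |h r - h s| = |h s - h r| := abs_sub_comm _ _
      linarith
  calc ENNReal.ofReal |h r| ≤ ENNReal.ofReal (|h s| + G.toReal) :=
        ENNReal.ofReal_le_ofReal hkey
    _ ≤ ENNReal.ofReal |h s| + ENNReal.ofReal G.toReal := ENNReal.ofReal_add_le
    _ ≤ ENNReal.ofReal |h s| + G := by
        gcongr
        exact ENNReal.ofReal_toReal_le
set_option maxHeartbeats 4000000 in
/-- **uniform Poincaré and trace inequalities in the thin direction.**
Let `Γ` be a C² closed surface with surface measure `μΓ` and unit normal `nv`, let
`g₀, g₁` satisfy `g₁ − g₀ ≥ c_g > 0` and `|gᵢ| ≤ M_g`, and for `ε ∈ (0,1]` let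
`Ω_ε = {y + r nv(y) : y ∈ Γ, ε g₀(y) < r < ε g₁(y)}` with inner/outer boundaries
`Γ_ε^i = {y + ε gᵢ(y) nv(y)}` (their surface measures `μB i` being, via the sanctioned
change of variables with Jacobians `J`, `w i` uniformly comparable to `1`, pushforwards
of `μΓ`).  Then there is `C > 0`, independent of `ε` and `φ`, such that for every
`W^{1,p}`-regular `φ` (continuous up to the boundary, differentiable inside) and
`i = 0, 1`:
`‖φ‖_{L^p(Ω_ε)} ≤ C (ε^{1/p} ‖φ‖_{L^p(Γ_ε^i)} + ε ‖∂_n φ‖_{L^p(Ω_ε)})` and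
`‖φ‖_{L^p(Γ_ε^i)} ≤ C (ε^{−1/p} ‖φ‖_{L^p(Ω_ε)} + ε^{1−1/p} ‖∂_n φ‖_{L^p(Ω_ε)})`,
where `∂_n φ(x) = (n̄·∇)φ(x) = fderiv φ x (nv (π x))`. -/
theorem stmt14
    (p : ℝ) (hp : 1 ≤ p)
    (Γ : Set (Fin 3 → ℝ)) (hΓmeas : MeasurableSet Γ) (hΓcomp : IsCompact Γ)
    (μΓ : Measure (Fin 3 → ℝ))
    (nv : (Fin 3 → ℝ) → Fin 3 → ℝ) (hnvm : Measurable nv)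
    (hnunit : ∀ y ∈ Γ, nv y ⬝ᵥ nv y = 1)
    (g : Fin 2 → (Fin 3 → ℝ) → ℝ) (hgm : ∀ i, Measurable (g i))
    (cg Mg : ℝ) (hcg : 0 < cg)
    (hglow : ∀ y ∈ Γ, cg ≤ g 1 y - g 0 y)
    (hgbd : ∀ i, ∀ y ∈ Γ, |g i y| ≤ Mg)
    (cJ : ℝ) (hcJ : 1 ≤ cJ) :
    ∃ C > 0, ∀ ε : ℝ, ε ∈ Set.Ioc (0 : ℝ) 1 →
      ∀ (Ω : Set (Fin 3 → ℝ)) (π : (Fin 3 → ℝ) → Fin 3 → ℝ)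
        (J : (Fin 3 → ℝ) → ℝ → ℝ) (w : Fin 2 → (Fin 3 → ℝ) → ℝ)
        (μB : Fin 2 → Measure (Fin 3 → ℝ)),
        IsOpen Ω →
        Ω = {x | ∃ y ∈ Γ, ∃ r : ℝ, ε * g 0 y < r ∧ r < ε * g 1 y ∧ x = y + r • nv y} →
        Measurable π →
        (∀ y ∈ Γ, ∀ r ∈ Set.Icc (ε * g 0 y) (ε * g 1 y), π (y + r • nv y) = y) →
        (∀ y ∈ Γ, ∀ r : ℝ, cJ⁻¹ ≤ J y r ∧ J y r ≤ cJ) →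
        (∀ i, ∀ y ∈ Γ, cJ⁻¹ ≤ w i y ∧ w i y ≤ cJ) →
        (∀ F : (Fin 3 → ℝ) → ℝ≥0∞, Measurable F →
          ∫⁻ x in Ω, F x =
            ∫⁻ y in Γ, (∫⁻ r in Set.Ioo (ε * g 0 y) (ε * g 1 y),
              F (y + r • nv y) * ENNReal.ofReal (J y r)) ∂μΓ) →
        (∀ i, ∀ F : (Fin 3 → ℝ) → ℝ≥0∞, Measurable F →
          ∫⁻ x, F x ∂(μB i) =
            ∫⁻ y in Γ, F (y + (ε * g i y) • nv y) * ENNReal.ofReal (w i y) ∂μΓ) →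
        ∀ φ : (Fin 3 → ℝ) → ℝ,
          ContinuousOn φ (closure Ω) → DifferentiableOn ℝ φ Ω →
          ∀ i : Fin 2,
            (∫⁻ x in Ω, ENNReal.ofReal (|φ x| ^ p)) ^ (1 / p) ≤
              ENNReal.ofReal C *
                (ENNReal.ofReal (ε ^ (1 / p)) *
                    (∫⁻ x, ENNReal.ofReal (|φ x| ^ p) ∂(μB i)) ^ (1 / p) +
                  ENNReal.ofReal ε *
                    (∫⁻ x in Ω,
                      ENNReal.ofReal (|fderiv ℝ φ x (nv (π x))| ^ p)) ^ (1 / p)) ∧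
            (∫⁻ x, ENNReal.ofReal (|φ x| ^ p) ∂(μB i)) ^ (1 / p) ≤
              ENNReal.ofReal C *
                (ENNReal.ofReal (ε ^ (-(1 / p))) *
                    (∫⁻ x in Ω, ENNReal.ofReal (|φ x| ^ p)) ^ (1 / p) +
                  ENNReal.ofReal (ε ^ (1 - 1 / p)) *
                    (∫⁻ x in Ω,
                      ENNReal.ofReal (|fderiv ℝ φ x (nv (π x))| ^ p)) ^ (1 / p)) := by
    classical
  have hp0 : (0:ℝ) < p := lt_of_lt_of_le one_pos hp
  set Mg' : ℝ := max Mg 0 with hMg'def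
  set K : ℝ := 2 * Mg' + 1 with hKdef
  have hK1 : (1:ℝ) ≤ K := by simp only [hKdef]; nlinarith [le_max_right Mg 0]
  have hK0 : (0:ℝ) < K := by linarith
  refine ⟨2 * cJ^2 * K * (1 + cg⁻¹), by positivity, ?_⟩
  set C : ℝ := 2 * cJ^2 * K * (1 + cg⁻¹) with hCdef
  rintro ε ⟨hε0, hε1⟩ Ω π J w μB hΩopen hΩdef hπm hπ hJ hw hChg hB φ hφc hφd i
  have hcJ0 : (0:ℝ) < cJ := lt_of_lt_of_le one_pos hcJ
  set ecJ : ℝ≥0∞ := ENNReal.ofReal cJ with hecJdef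
  have hecJ1 : 1 ≤ ecJ := by
    rw [hecJdef, ← ENNReal.ofReal_one]; exact ENNReal.ofReal_le_ofReal hcJ
  have hecJtop : ecJ ≠ ⊤ := ENNReal.ofReal_ne_top
  have hcJcancel : ecJ * ENNReal.ofReal cJ⁻¹ = 1 := by
    rw [hecJdef, ← ENNReal.ofReal_mul hcJ0.le, mul_inv_cancel₀ hcJ0.ne', ENNReal.ofReal_one]
  set eKε : ℝ≥0∞ := ENNReal.ofReal (K * ε) with heKεdef
  have hKε0 : (0:ℝ) < K * ε := by positivity
  have heKε0 : eKε ≠ 0 := by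
    simp [heKεdef, ENNReal.ofReal_eq_zero, not_le, hKε0]
  have heKεtop : eKε ≠ ⊤ := ENNReal.ofReal_ne_top
  set einv : ℝ≥0∞ := ENNReal.ofReal ((cg * ε)⁻¹) with heinvdef
  have hcgε0 : (0:ℝ) < cg * ε := by positivity
  -- width bounds
  have hab : ∀ y ∈ Γ, ε * g 0 y < ε * g 1 y := by
    intro y hy; nlinarith [hglow y hy]
  have hwidthK : ∀ y ∈ Γ, ε * g 1 y - ε * g 0 y ≤ K * ε := by
    intro y hy
    have h0 := hgbd 0 y hy
    have h1 := hgbd 1 y hy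
    have := le_max_left Mg 0
    rw [hKdef]
    nlinarith [abs_le.1 h0, abs_le.1 h1]
  have hwidthc : ∀ y ∈ Γ, cg * ε ≤ ε * g 1 y - ε * g 0 y := by
    intro y hy; nlinarith [hglow y hy]
  -- modified φ
  set φ' : (Fin 3 → ℝ) → ℝ := (closure Ω).piecewise φ (fun _ => 0) with hφ'def
  have hφ'eq : ∀ x ∈ closure Ω, φ' x = φ x := fun x hx => Set.piecewise_eq_of_mem _ _ _ hx
  have hφ'm : Measurable φ' :=
    ContinuousOn.measurable_piecewise hφc continuousOn_const isClosed_closure.measurableSet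
  have hφ'c : ContinuousOn φ' (closure Ω) := hφc.congr hφ'eq
  set F : (Fin 3 → ℝ) → ℝ≥0∞ := fun x => ENNReal.ofReal (|φ' x| ^ p) with hFdef
  have hFm : Measurable F := ((hφ'm.abs.pow measurable_const)).ennreal_ofReal
  set Fd : (Fin 3 → ℝ) → ℝ≥0∞ :=
    fun x => ENNReal.ofReal (|fderiv ℝ φ' x (nv (π x))| ^ p) with hFddef
  have hFdm : Measurable Fd := by
    have h1 : Measurable (fderiv ℝ φ') := measurable_fderiv ℝ φ'
    have h2 : Measurable fun x => nv (π x) := hnvm.comp hπm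
    have h3 : Measurable fun x => (fderiv ℝ φ' x) (nv (π x)) :=
      (isBoundedBilinearMap_apply.continuous.measurable).comp (h1.prodMk h2)
    exact ((h3.abs.pow measurable_const)).ennreal_ofReal
  have hΩmeas : MeasurableSet Ω := hΩopen.measurableSet
  -- membership facts
  have hmΩ : ∀ y ∈ Γ, ∀ r ∈ Set.Ioo (ε * g 0 y) (ε * g 1 y), y + r • nv y ∈ Ω := by
    intro y hy r hr
    rw [hΩdef]; exact ⟨y, hy, r, hr.1, hr.2, rfl⟩
  have hclos : ∀ y ∈ Γ, ∀ s ∈ Set.Icc (ε * g 0 y) (ε * g 1 y), y + s • nv y ∈ closure Ω := by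
    intro y hy s hsIcc
    have hcont : Continuous (fun r : ℝ => y + r • nv y) := continuous_const.add (continuous_id.smul continuous_const)
    have h1 : s ∈ closure (Set.Ioo (ε * g 0 y) (ε * g 1 y)) := by
      rw [closure_Ioo (ne_of_lt (hab y hy))]; exact hsIcc
    have h2 := image_closure_subset_closure_image (s := Set.Ioo (ε * g 0 y) (ε * g 1 y)) hcont
      (Set.mem_image_of_mem _ h1)
    exact closure_mono (Set.image_subset_iff.2 (hmΩ y hy)) h2
  have hsIcc : ∀ y ∈ Γ, ∀ j : Fin 2,
      ε * g j y ∈ Set.Icc (ε * g 0 y) (ε * g 1 y) := by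
    intro y hy j
    fin_cases j
    · exact ⟨le_refl _, le_of_lt (hab y hy)⟩
    · exact ⟨le_of_lt (hab y hy), le_refl _⟩
  -- abbreviations
  set A : (Fin 3 → ℝ) → ℝ≥0∞ :=
    fun y => ∫⁻ r in Set.Ioo (ε * g 0 y) (ε * g 1 y), F (y + r • nv y) with hAdef
  set Bd : (Fin 3 → ℝ) → ℝ≥0∞ :=
    fun y => ∫⁻ r in Set.Ioo (ε * g 0 y) (ε * g 1 y), Fd (y + r • nv y) with hBddef
  set T : (Fin 3 → ℝ) → ℝ≥0∞ := fun y => F (y + (ε * g i y) • nv y) with hTdef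
  have hTm : Measurable T :=
    hFm.comp (measurable_id.add ((measurable_const.mul (hgm i)).smul hnvm))
  have hAm : Measurable A := by
    have hS : MeasurableSet {z : (Fin 3 → ℝ) × ℝ | ε * g 0 z.1 < z.2 ∧ z.2 < ε * g 1 z.1} := by
      refine MeasurableSet.inter ?_ ?_
      · exact measurableSet_lt (measurable_const.mul ((hgm 0).comp measurable_fst)) measurable_snd
      · exact measurableSet_lt measurable_snd (measurable_const.mul ((hgm 1).comp measurable_fst))
    have hFi : Measurable fun z : (Fin 3 → ℝ) × ℝ => F (z.1 + z.2 • nv z.1) :=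
      hFm.comp (measurable_fst.add (measurable_snd.smul (hnvm.comp measurable_fst)))
    have hmix : Measurable fun y => ∫⁻ r : ℝ,
        ({z : (Fin 3 → ℝ) × ℝ | ε * g 0 z.1 < z.2 ∧ z.2 < ε * g 1 z.1}.indicator
          (fun z => F (z.1 + z.2 • nv z.1))) (y, r) :=
      Measurable.lintegral_prod_right' (hFi.indicator hS)
    have : A = fun y => ∫⁻ r : ℝ,
        ({z : (Fin 3 → ℝ) × ℝ | ε * g 0 z.1 < z.2 ∧ z.2 < ε * g 1 z.1}.indicator
          (fun z => F (z.1 + z.2 • nv z.1))) (y, r) := by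
      funext y
      simp only [hAdef]
      rw [← lintegral_indicator measurableSet_Ioo]
      refine lintegral_congr fun r => ?_
      by_cases hr : r ∈ Set.Ioo (ε * g 0 y) (ε * g 1 y)
      · rw [Set.indicator_of_mem hr, Set.indicator_of_mem (by exact ⟨hr.1, hr.2⟩)]
      · rw [Set.indicator_of_notMem hr, Set.indicator_of_notMem (by
          simpa [Set.mem_Ioo] using hr)]
    rw [this]
    exact hmix
  -- integrals
  set SΩ : ℝ≥0∞ := ∫⁻ x in Ω, F x with hSΩdef
  set DΩ : ℝ≥0∞ := ∫⁻ x in Ω, Fd x with hDΩdef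
  set Si : ℝ≥0∞ := ∫⁻ x, F x ∂(μB i) with hSidef
  -- congruence with the statement's integrals
  have hSeq : (∫⁻ x in Ω, ENNReal.ofReal (|φ x| ^ p)) = SΩ := by
    refine setLIntegral_congr_fun hΩmeas (fun x hx => ?_)
    simp only [hFdef]
    rw [hφ'eq x (subset_closure hx)]
  have hDeq : (∫⁻ x in Ω, ENNReal.ofReal (|fderiv ℝ φ x (nv (π x))| ^ p)) = DΩ := by
    refine setLIntegral_congr_fun hΩmeas (fun x hx => ?_)
    have hev : φ' =ᶠ[nhds x] φ := Filter.eventuallyEq_of_mem (hΩopen.mem_nhds hx)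
      (fun z hz => hφ'eq z (subset_closure hz))
    simp only [hFddef]
    rw [hev.fderiv_eq]
  have hBeq : (∫⁻ x, ENNReal.ofReal (|φ x| ^ p) ∂(μB i)) = Si := by
    have hmeasC : MeasurableSet ((closure Ω)ᶜ) := isClosed_closure.measurableSet.compl
    have hnull : μB i ((closure Ω)ᶜ) = 0 := by
      have h0 := hB i (((closure Ω)ᶜ).indicator (fun _ => 1)) (measurable_one.indicator hmeasC)
      rw [lintegral_indicator hmeasC, setLIntegral_one] at h0
      rw [h0]
      refine le_antisymm ?_ zero_le
      have hzero : ∀ y ∈ Γ, (closure Ω)ᶜ.indicator (fun _ => (1:ℝ≥0∞))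
          (y + (ε * g i y) • nv y) * ENNReal.ofReal (w i y) ≤ (0:ℝ≥0∞) := by
        intro y hy
        have hmem : y + (ε * g i y) • nv y ∉ (closure Ω)ᶜ :=
          Set.notMem_compl_iff.2 (hclos y hy _ (hsIcc y hy i))
        rw [Set.indicator_of_notMem hmem, zero_mul]
      refine le_trans (setLIntegral_mono' hΓmeas hzero) ?_
      simp
    rw [hSidef]
    refine lintegral_congr_ae (Filter.eventuallyEq_of_mem (mem_ae_iff.2 hnull) fun x hx => ?_)
    simp only [hFdef]
    rw [hφ'eq x hx]
  -- key pointwise estimate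
  have hpt : ∀ y ∈ Γ, ∀ u ∈ Set.Icc (ε * g 0 y) (ε * g 1 y),
      ∀ v ∈ Set.Icc (ε * g 0 y) (ε * g 1 y),
      F (y + u • nv y) ≤ 2 ^ p * (F (y + v • nv y) + eKε ^ (p-1) * Bd y) := by
    intro y hy u hu v hv
    set a := ε * g 0 y with hadef
    set b := ε * g 1 y with hbdef
    set h : ℝ → ℝ := fun r => φ' (y + r • nv y) with hhdef
    have hcontm : Continuous (fun r : ℝ => y + r • nv y) :=
      continuous_const.add (continuous_id.smul continuous_const)
    have hch : ContinuousOn h (Set.Icc a b) :=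
      hφ'c.comp hcontm.continuousOn (fun r hr => hclos y hy r hr)
    have hderAt : ∀ r ∈ Set.Ioo a b, HasDerivAt h (fderiv ℝ φ' (y + r • nv y) (nv y)) r := by
      intro r hr
      have hx : y + r • nv y ∈ Ω := hmΩ y hy r hr
      have hdφ : DifferentiableAt ℝ φ (y + r • nv y) :=
        (hφd _ hx).differentiableAt (hΩopen.mem_nhds hx)
      have hev : φ' =ᶠ[nhds (y + r • nv y)] φ := Filter.eventuallyEq_of_mem (hΩopen.mem_nhds hx)
        (fun z hz => hφ'eq z (subset_closure hz))
      have hdφ' : DifferentiableAt ℝ φ' (y + r • nv y) := hdφ.congr_of_eventuallyEq hev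
      have hm : HasDerivAt (fun r : ℝ => y + r • nv y) (nv y) r := by
        simpa using ((hasDerivAt_id r).smul_const (nv y)).const_add y
      exact hdφ'.hasFDerivAt.comp_hasDerivAt r hm
    have hdiffh : ∀ r ∈ Set.Ioo a b, DifferentiableAt ℝ h r :=
      fun r hr => (hderAt r hr).differentiableAt
    have hFdeq : ∀ r ∈ Set.Ioo a b, Fd (y + r • nv y) = ENNReal.ofReal (|deriv h r| ^ p) := by
      intro r hr
      have hd := (hderAt r hr).deriv
      simp only [hFddef]
      rw [hπ y hy r ⟨le_of_lt hr.1, le_of_lt hr.2⟩, hd]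
    have hftc := aux_ftc hch hdiffh hv hu
    set G := ∫⁻ t in Set.Ioo a b, ENNReal.ofReal |deriv h t| with hGdef
    have hGp : G ^ p ≤ eKε ^ (p-1) * Bd y := by
      have hmeas : Measurable fun t => ENNReal.ofReal |deriv h t| :=
        ((measurable_deriv h).abs).ennreal_ofReal
      have hH := aux_holder hp (s := Set.Ioo a b) (fun t => ENNReal.ofReal |deriv h t|) hmeas
      have hBeq2 : ∫⁻ t in Set.Ioo a b, (ENNReal.ofReal |deriv h t|) ^ p = Bd y := by
        simp only [hBddef]
        refine setLIntegral_congr_fun measurableSet_Ioo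
          (fun t ht => ?_)
        rw [ENNReal.ofReal_rpow_of_nonneg (abs_nonneg _) (by linarith : (0:ℝ) ≤ p),
          hFdeq t ht]
      rw [hBeq2] at hH
      have hvol : volume (Set.Ioo a b) ≤ eKε := by
        rw [Real.volume_Ioo]
        exact ENNReal.ofReal_le_ofReal (hwidthK y hy)
      calc G ^ p ≤ ((volume (Set.Ioo a b)) ^ (1 - 1/p) * (Bd y) ^ (1/p)) ^ p :=
            ENNReal.rpow_le_rpow hH (by linarith)
        _ = (volume (Set.Ioo a b)) ^ ((1 - 1/p)*p) * (Bd y) ^ ((1/p)*p) := by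
            rw [ENNReal.mul_rpow_of_nonneg _ _ (by linarith : (0:ℝ) ≤ p),
              ← ENNReal.rpow_mul, ← ENNReal.rpow_mul]
        _ = (volume (Set.Ioo a b)) ^ (p-1) * (Bd y) := by
            rw [show (1 - 1/p)*p = p - 1 by field_simp,
              show (1/p)*p = 1 by field_simp, ENNReal.rpow_one]
        _ ≤ eKε ^ (p-1) * Bd y := by
            exact mul_le_mul_left (ENNReal.rpow_le_rpow hvol (by linarith)) _
    have hcomb := aux_pow2 hp hftc
    calc F (y + u • nv y) = (ENNReal.ofReal |h u|) ^ p := by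
          simp only [hFdef]
          rw [ENNReal.ofReal_rpow_of_nonneg (abs_nonneg _) (by linarith : (0:ℝ) ≤ p)]
      _ ≤ 2^p * ((ENNReal.ofReal |h v|)^p + G^p) := hcomb
      _ ≤ 2^p * (F (y + v • nv y) + eKε^(p-1) * Bd y) := by
          refine mul_le_mul_right (add_le_add (le_of_eq ?_) hGp) _
          simp only [hFdef]
          rw [ENNReal.ofReal_rpow_of_nonneg (abs_nonneg _) (by linarith : (0:ℝ) ≤ p)]
  -- comparisons between Γ-integrals and Ω/μB integrals
  have hfin2p : (2:ℝ≥0∞)^p ≠ ⊤ := ENNReal.rpow_ne_top_of_nonneg (by linarith) (by norm_num)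
  have hfinKε1 : eKε^(p-1) ≠ ⊤ := ENNReal.rpow_ne_top_of_nonneg (by linarith) heKεtop
  have hfinKεp : eKε^p ≠ ⊤ := ENNReal.rpow_ne_top_of_nonneg (by linarith) heKεtop
  have heinvtop : einv ≠ ⊤ := ENNReal.ofReal_ne_top
  have hKεpow : eKε ^ (p-1) * eKε = eKε ^ p := by
    nth_rewrite 2 [← ENNReal.rpow_one eKε]
    rw [← ENNReal.rpow_add _ _ heKε0 heKεtop, sub_add_cancel]
  have hAS : ∫⁻ y in Γ, A y ∂μΓ ≤ ecJ * SΩ := by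
    have hlow : ∫⁻ y in Γ, ENNReal.ofReal cJ⁻¹ * A y ∂μΓ ≤ SΩ := by
      rw [hSΩdef, hChg F hFm]
      refine setLIntegral_mono' hΓmeas fun y hy => ?_
      simp only [hAdef]
      rw [← lintegral_const_mul' _ _ ENNReal.ofReal_ne_top]
      refine setLIntegral_mono' measurableSet_Ioo fun r hr => ?_
      rw [mul_comm]
      exact mul_le_mul_right (ENNReal.ofReal_le_ofReal (hJ y hy r).1) _
    rw [lintegral_const_mul' _ _ ENNReal.ofReal_ne_top] at hlow
    calc ∫⁻ y in Γ, A y ∂μΓ = (ecJ * ENNReal.ofReal cJ⁻¹) * ∫⁻ y in Γ, A y ∂μΓ := by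
          rw [hcJcancel, one_mul]
      _ = ecJ * (ENNReal.ofReal cJ⁻¹ * ∫⁻ y in Γ, A y ∂μΓ) := by rw [mul_assoc]
      _ ≤ ecJ * SΩ := mul_le_mul_right hlow _
  have hBdD : ∫⁻ y in Γ, Bd y ∂μΓ ≤ ecJ * DΩ := by
    have hlow : ∫⁻ y in Γ, ENNReal.ofReal cJ⁻¹ * Bd y ∂μΓ ≤ DΩ := by
      rw [hDΩdef, hChg Fd hFdm]
      refine setLIntegral_mono' hΓmeas fun y hy => ?_
      simp only [hBddef]
      rw [← lintegral_const_mul' _ _ ENNReal.ofReal_ne_top]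
      refine setLIntegral_mono' measurableSet_Ioo fun r hr => ?_
      rw [mul_comm]
      exact mul_le_mul_right (ENNReal.ofReal_le_ofReal (hJ y hy r).1) _
    rw [lintegral_const_mul' _ _ ENNReal.ofReal_ne_top] at hlow
    calc ∫⁻ y in Γ, Bd y ∂μΓ = (ecJ * ENNReal.ofReal cJ⁻¹) * ∫⁻ y in Γ, Bd y ∂μΓ := by
          rw [hcJcancel, one_mul]
      _ = ecJ * (ENNReal.ofReal cJ⁻¹ * ∫⁻ y in Γ, Bd y ∂μΓ) := by rw [mul_assoc]
      _ ≤ ecJ * DΩ := mul_le_mul_right hlow _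
  have hTS : ∫⁻ y in Γ, T y ∂μΓ ≤ ecJ * Si := by
    have hlow : ∫⁻ y in Γ, ENNReal.ofReal cJ⁻¹ * T y ∂μΓ ≤ Si := by
      rw [hSidef, hB i F hFm]
      refine setLIntegral_mono' hΓmeas fun y hy => ?_
      rw [mul_comm]
      exact mul_le_mul_right (ENNReal.ofReal_le_ofReal (hw i y hy).1) _
    rw [lintegral_const_mul' _ _ ENNReal.ofReal_ne_top] at hlow
    calc ∫⁻ y in Γ, T y ∂μΓ = (ecJ * ENNReal.ofReal cJ⁻¹) * ∫⁻ y in Γ, T y ∂μΓ := by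
          rw [hcJcancel, one_mul]
      _ = ecJ * (ENNReal.ofReal cJ⁻¹ * ∫⁻ y in Γ, T y ∂μΓ) := by rw [mul_assoc]
      _ ≤ ecJ * Si := mul_le_mul_right hlow _
  -- main chain 1
  have main1 : SΩ ≤ (2 ^ p * eKε * ecJ * ecJ) * Si +
      (2 ^ p * eKε ^ (p-1) * eKε * ecJ * ecJ) * DΩ := by
    have step1 : SΩ ≤ ∫⁻ y in Γ,
        ((2^p * eKε * ecJ) * T y + (2^p * eKε^(p-1) * eKε * ecJ) * Bd y) ∂μΓ := by
      rw [hSΩdef, hChg F hFm]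
      refine setLIntegral_mono' hΓmeas fun y hy => ?_
      calc ∫⁻ r in Set.Ioo (ε * g 0 y) (ε * g 1 y), F (y + r • nv y) * ENNReal.ofReal (J y r)
          ≤ ∫⁻ _r in Set.Ioo (ε * g 0 y) (ε * g 1 y),
            (2^p * (T y + eKε^(p-1) * Bd y)) * ecJ := by
            refine setLIntegral_mono' measurableSet_Ioo fun r hr => ?_
            exact mul_le_mul' (hpt y hy r ⟨le_of_lt hr.1, le_of_lt hr.2⟩ _ (hsIcc y hy i))
              (ENNReal.ofReal_le_ofReal (hJ y hy r).2)
        _ = (2^p * (T y + eKε^(p-1) * Bd y)) * ecJ *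
            volume (Set.Ioo (ε * g 0 y) (ε * g 1 y)) := setLIntegral_const _ _
        _ ≤ (2^p * (T y + eKε^(p-1) * Bd y)) * ecJ * eKε := by
            refine mul_le_mul_right ?_ _
            rw [Real.volume_Ioo]; exact ENNReal.ofReal_le_ofReal (hwidthK y hy)
        _ = (2^p * eKε * ecJ) * T y + (2^p * eKε^(p-1) * eKε * ecJ) * Bd y := by ring
    have hfa : (2:ℝ≥0∞)^p * eKε * ecJ ≠ ⊤ :=
      ENNReal.mul_ne_top (ENNReal.mul_ne_top hfin2p heKεtop) hecJtop
    have hfb : (2:ℝ≥0∞)^p * eKε^(p-1) * eKε * ecJ ≠ ⊤ :=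
      ENNReal.mul_ne_top (ENNReal.mul_ne_top (ENNReal.mul_ne_top hfin2p hfinKε1) heKεtop) hecJtop
    have hadd : ∫⁻ y in Γ,
        ((2^p * eKε * ecJ) * T y + (2^p * eKε^(p-1) * eKε * ecJ) * Bd y) ∂μΓ
        = (2^p * eKε * ecJ) * ∫⁻ y in Γ, T y ∂μΓ +
          (2^p * eKε^(p-1) * eKε * ecJ) * ∫⁻ y in Γ, Bd y ∂μΓ := by
      rw [lintegral_add_left (hTm.const_mul _), lintegral_const_mul' _ _ hfa,
        lintegral_const_mul' _ _ hfb]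
    calc SΩ ≤ _ := step1
      _ = _ := hadd
      _ ≤ (2^p * eKε * ecJ) * (ecJ * Si) + (2^p * eKε^(p-1) * eKε * ecJ) * (ecJ * DΩ) :=
          add_le_add (mul_le_mul_right hTS _) (mul_le_mul_right hBdD _)
      _ = (2^p * eKε * ecJ * ecJ) * Si + (2^p * eKε^(p-1) * eKε * ecJ * ecJ) * DΩ := by ring
  -- main chain 2
  have main2 : Si ≤ (ecJ * einv * 2 ^ p * ecJ) * SΩ +
      (ecJ * einv * 2 ^ p * eKε ^ p * ecJ) * DΩ := by
    have step0 : ∀ y ∈ Γ, T y * ENNReal.ofReal (w i y) ≤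
        ecJ * (einv * (2^p * (A y + eKε^p * Bd y))) := by
      intro y hy
      have h1 : ENNReal.ofReal (cg * ε) * T y ≤ 2^p * (A y + eKε^p * Bd y) := by
        calc ENNReal.ofReal (cg * ε) * T y
            ≤ volume (Set.Ioo (ε * g 0 y) (ε * g 1 y)) * T y := by
              rw [Real.volume_Ioo]
              exact mul_le_mul_left (ENNReal.ofReal_le_ofReal (hwidthc y hy)) _
          _ = ∫⁻ _r in Set.Ioo (ε * g 0 y) (ε * g 1 y), T y := by
              rw [setLIntegral_const, mul_comm]
          _ ≤ ∫⁻ r in Set.Ioo (ε * g 0 y) (ε * g 1 y),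
              2^p * (F (y + r • nv y) + eKε^(p-1) * Bd y) :=
              setLIntegral_mono' measurableSet_Ioo fun r hr =>
                hpt y hy _ (hsIcc y hy i) r ⟨le_of_lt hr.1, le_of_lt hr.2⟩
          _ = 2^p * (A y + (eKε^(p-1) * Bd y) * volume (Set.Ioo (ε * g 0 y) (ε * g 1 y))) := by
              rw [lintegral_const_mul' _ _ hfin2p, lintegral_add_right' _ aemeasurable_const,
                setLIntegral_const]
          _ ≤ 2^p * (A y + eKε^p * Bd y) := by
              refine mul_le_mul_right (add_le_add le_rfl ?_) _
              calc (eKε^(p-1) * Bd y) * volume (Set.Ioo (ε * g 0 y) (ε * g 1 y))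
                  ≤ (eKε^(p-1) * Bd y) * eKε := by
                    refine mul_le_mul_right ?_ _
                    rw [Real.volume_Ioo]; exact ENNReal.ofReal_le_ofReal (hwidthK y hy)
                _ = eKε^p * Bd y := by rw [mul_right_comm, hKεpow]
      have hcancel : einv * ENNReal.ofReal (cg * ε) = 1 := by
        rw [heinvdef, ← ENNReal.ofReal_mul (inv_nonneg.2 hcgε0.le),
          inv_mul_cancel₀ hcgε0.ne', ENNReal.ofReal_one]
      have h2 : T y ≤ einv * (2^p * (A y + eKε^p * Bd y)) := by
        calc T y = einv * (ENNReal.ofReal (cg * ε) * T y) := by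
              rw [← mul_assoc, hcancel, one_mul]
          _ ≤ einv * (2^p * (A y + eKε^p * Bd y)) := mul_le_mul_right h1 _
      calc T y * ENNReal.ofReal (w i y) ≤ T y * ecJ :=
            mul_le_mul_right (ENNReal.ofReal_le_ofReal (hw i y hy).2) _
        _ = ecJ * T y := mul_comm _ _
        _ ≤ ecJ * (einv * (2^p * (A y + eKε^p * Bd y))) := mul_le_mul_right h2 _
    have hfc : ecJ * einv * (2:ℝ≥0∞)^p ≠ ⊤ :=
      ENNReal.mul_ne_top (ENNReal.mul_ne_top hecJtop heinvtop) hfin2p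
    have hfd : ecJ * einv * (2:ℝ≥0∞)^p * eKε^p ≠ ⊤ := ENNReal.mul_ne_top hfc hfinKεp
    calc Si = ∫⁻ y in Γ, T y * ENNReal.ofReal (w i y) ∂μΓ := by rw [hSidef, hB i F hFm]
      _ ≤ ∫⁻ y in Γ, ((ecJ * einv * 2^p) * A y + (ecJ * einv * 2^p * eKε^p) * Bd y) ∂μΓ :=
          setLIntegral_mono' hΓmeas fun y hy =>
            le_trans (step0 y hy) (le_of_eq (by ring))
      _ = (ecJ * einv * 2^p) * ∫⁻ y in Γ, A y ∂μΓ +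
          (ecJ * einv * 2^p * eKε^p) * ∫⁻ y in Γ, Bd y ∂μΓ := by
          rw [lintegral_add_left (hAm.const_mul _), lintegral_const_mul' _ _ hfc,
            lintegral_const_mul' _ _ hfd]
      _ ≤ (ecJ * einv * 2^p) * (ecJ * SΩ) + (ecJ * einv * 2^p * eKε^p) * (ecJ * DΩ) :=
          add_le_add (mul_le_mul_right hAS _) (mul_le_mul_right hBdD _)
      _ = (ecJ * einv * 2^p * ecJ) * SΩ + (ecJ * einv * 2^p * eKε^p * ecJ) * DΩ := by ring
  -- scalar bounds
  have hq0 : (0:ℝ) ≤ 1/p := by positivity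
  have hq1 : (1:ℝ)/p ≤ 1 := by rw [div_le_one hp0]; linarith
  have hecJq : ecJ ^ ((1:ℝ)/p) ≤ ecJ := by
    calc ecJ ^ ((1:ℝ)/p) ≤ ecJ ^ (1:ℝ) := ENNReal.rpow_le_rpow_of_exponent_le hecJ1 hq1
      _ = ecJ := ENNReal.rpow_one _
  have h2q : ((2:ℝ≥0∞)^p)^((1:ℝ)/p) = 2 := by
    rw [← ENNReal.rpow_mul, mul_one_div, div_self hp0.ne', ENNReal.rpow_one]
  have hKεq : eKε^((1:ℝ)/p) ≤ ENNReal.ofReal K * ENNReal.ofReal (ε^((1:ℝ)/p)) := by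
    rw [heKεdef, ENNReal.ofReal_rpow_of_nonneg hKε0.le hq0,
      Real.mul_rpow hK0.le hε0.le, ENNReal.ofReal_mul (by positivity)]
    refine mul_le_mul_left (ENNReal.ofReal_le_ofReal ?_) _
    calc K ^ ((1:ℝ)/p) ≤ K ^ (1:ℝ) := Real.rpow_le_rpow_of_exponent_le hK1 hq1
      _ = K := Real.rpow_one _
  have hKεfull : (eKε^p)^((1:ℝ)/p) = ENNReal.ofReal K * ENNReal.ofReal ε := by
    rw [← ENNReal.rpow_mul, mul_one_div, div_self hp0.ne', ENNReal.rpow_one,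
      heKεdef, ENNReal.ofReal_mul hK0.le]
  have hinvq : einv^((1:ℝ)/p) ≤ ENNReal.ofReal (1+cg⁻¹) * ENNReal.ofReal (ε^(-(1/p))) := by
    rw [heinvdef, ENNReal.ofReal_rpow_of_nonneg (by positivity) hq0]
    have he1 : ((cg*ε)⁻¹) ^ ((1:ℝ)/p) = (cg⁻¹)^((1:ℝ)/p) * ε^(-(1/p)) := by
      rw [mul_inv, Real.mul_rpow (by positivity) (by positivity),
        Real.inv_rpow hε0.le, ← Real.rpow_neg hε0.le]
    rw [he1, ENNReal.ofReal_mul (by positivity)]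
    refine mul_le_mul_left (ENNReal.ofReal_le_ofReal ?_) _
    rcases le_total (cg⁻¹) 1 with hc | hc
    · have := Real.rpow_le_one (by positivity) hc hq0
      have : (0:ℝ) ≤ cg⁻¹ := by positivity
      linarith [Real.rpow_le_one (by positivity : (0:ℝ) ≤ cg⁻¹) hc hq0]
    · have h1 := Real.rpow_le_rpow_of_exponent_le hc hq1
      rw [Real.rpow_one] at h1
      linarith
  have SB1 : (2 ^ p * eKε * ecJ * ecJ) ^ (1/p) ≤
      ENNReal.ofReal C * ENNReal.ofReal (ε ^ (1/p)) := by
    calc (2^p * eKε * ecJ * ecJ) ^ ((1:ℝ)/p)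
        = ((2:ℝ≥0∞)^p)^((1:ℝ)/p) * eKε^((1:ℝ)/p) * ecJ^((1:ℝ)/p) * ecJ^((1:ℝ)/p) := by
          rw [ENNReal.mul_rpow_of_nonneg _ _ hq0, ENNReal.mul_rpow_of_nonneg _ _ hq0,
            ENNReal.mul_rpow_of_nonneg _ _ hq0]
      _ ≤ 2 * (ENNReal.ofReal K * ENNReal.ofReal (ε^((1:ℝ)/p))) * ecJ * ecJ := by
          rw [h2q]
          exact mul_le_mul' (mul_le_mul' (mul_le_mul' le_rfl hKεq) hecJq) hecJq
      _ = (2 * ENNReal.ofReal K * ecJ * ecJ) * ENNReal.ofReal (ε^((1:ℝ)/p)) := by ring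
      _ ≤ ENNReal.ofReal C * ENNReal.ofReal (ε ^ (1/p)) := by
          refine mul_le_mul_left ?_ _
          rw [hecJdef, show ((2:ℝ≥0∞)) = ENNReal.ofReal 2 by simp,
            ← ENNReal.ofReal_mul (by norm_num : (0:ℝ) ≤ 2),
            ← ENNReal.ofReal_mul (by positivity : (0:ℝ) ≤ 2*K),
            ← ENNReal.ofReal_mul (by positivity : (0:ℝ) ≤ 2*K*cJ)]
          refine ENNReal.ofReal_le_ofReal ?_
          rw [hCdef]
          nlinarith [mul_nonneg (mul_nonneg (mul_nonneg hK0.le hcJ0.le) hcJ0.le)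
            (inv_nonneg.2 hcg.le)]
  have SB2 : (2 ^ p * eKε ^ (p-1) * eKε * ecJ * ecJ) ^ (1/p) ≤
      ENNReal.ofReal C * ENNReal.ofReal ε := by
    have : (2:ℝ≥0∞)^p * eKε^(p-1) * eKε * ecJ * ecJ = 2^p * eKε^p * ecJ * ecJ := by
      rw [mul_assoc ((2:ℝ≥0∞)^p) (eKε^(p-1)) eKε, hKεpow]
    rw [this]
    calc (2^p * eKε^p * ecJ * ecJ) ^ ((1:ℝ)/p)
        = ((2:ℝ≥0∞)^p)^((1:ℝ)/p) * (eKε^p)^((1:ℝ)/p) * ecJ^((1:ℝ)/p) * ecJ^((1:ℝ)/p) := by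
          rw [ENNReal.mul_rpow_of_nonneg _ _ hq0, ENNReal.mul_rpow_of_nonneg _ _ hq0,
            ENNReal.mul_rpow_of_nonneg _ _ hq0]
      _ ≤ 2 * (ENNReal.ofReal K * ENNReal.ofReal ε) * ecJ * ecJ := by
          rw [h2q, hKεfull]
          exact mul_le_mul' (mul_le_mul' le_rfl hecJq) hecJq
      _ = (2 * ENNReal.ofReal K * ecJ * ecJ) * ENNReal.ofReal ε := by ring
      _ ≤ ENNReal.ofReal C * ENNReal.ofReal ε := by
          refine mul_le_mul_left ?_ _
          rw [hecJdef, show ((2:ℝ≥0∞)) = ENNReal.ofReal 2 by simp,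
            ← ENNReal.ofReal_mul (by norm_num : (0:ℝ) ≤ 2),
            ← ENNReal.ofReal_mul (by positivity : (0:ℝ) ≤ 2*K),
            ← ENNReal.ofReal_mul (by positivity : (0:ℝ) ≤ 2*K*cJ)]
          refine ENNReal.ofReal_le_ofReal ?_
          rw [hCdef]
          nlinarith [mul_nonneg (mul_nonneg (mul_nonneg hK0.le hcJ0.le) hcJ0.le)
            (inv_nonneg.2 hcg.le)]
  have SB3 : (ecJ * einv * 2 ^ p * ecJ) ^ (1/p) ≤
      ENNReal.ofReal C * ENNReal.ofReal (ε ^ (-(1/p))) := by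
    calc (ecJ * einv * 2^p * ecJ) ^ ((1:ℝ)/p)
        = ecJ^((1:ℝ)/p) * einv^((1:ℝ)/p) * ((2:ℝ≥0∞)^p)^((1:ℝ)/p) * ecJ^((1:ℝ)/p) := by
          rw [ENNReal.mul_rpow_of_nonneg _ _ hq0, ENNReal.mul_rpow_of_nonneg _ _ hq0,
            ENNReal.mul_rpow_of_nonneg _ _ hq0]
      _ ≤ ecJ * (ENNReal.ofReal (1+cg⁻¹) * ENNReal.ofReal (ε^(-(1/p)))) * 2 * ecJ := by
          rw [h2q]
          exact mul_le_mul' (mul_le_mul' (mul_le_mul' hecJq hinvq) le_rfl) hecJq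
      _ = (ecJ * ENNReal.ofReal (1+cg⁻¹) * 2 * ecJ) * ENNReal.ofReal (ε^(-(1/p))) := by ring
      _ ≤ ENNReal.ofReal C * ENNReal.ofReal (ε ^ (-(1/p))) := by
          refine mul_le_mul_left ?_ _
          rw [hecJdef, show ((2:ℝ≥0∞)) = ENNReal.ofReal 2 by simp,
            ← ENNReal.ofReal_mul (by positivity : (0:ℝ) ≤ cJ),
            ← ENNReal.ofReal_mul (by positivity : (0:ℝ) ≤ cJ*(1+cg⁻¹)),
            ← ENNReal.ofReal_mul (by positivity : (0:ℝ) ≤ cJ*(1+cg⁻¹)*2)]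
          refine ENNReal.ofReal_le_ofReal ?_
          rw [hCdef]
          nlinarith [mul_nonneg (mul_nonneg (mul_pos hcJ0 hcJ0).le
            (by positivity : (0:ℝ) ≤ 1+cg⁻¹)) (by linarith : (0:ℝ) ≤ K - 1)]
  have SB4 : (ecJ * einv * 2 ^ p * eKε ^ p * ecJ) ^ (1/p) ≤
      ENNReal.ofReal C * ENNReal.ofReal (ε ^ (1 - 1/p)) := by
    have hεcomb : ENNReal.ofReal (ε^(-(1/p))) * ENNReal.ofReal ε =
        ENNReal.ofReal (ε ^ (1 - 1/p)) := by
      rw [← ENNReal.ofReal_mul (by positivity)]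
      congr 1
      rw [show (1 - 1/p : ℝ) = -(1/p) + 1 by ring, Real.rpow_add hε0, Real.rpow_one]
    calc (ecJ * einv * 2^p * eKε^p * ecJ) ^ ((1:ℝ)/p)
        = ecJ^((1:ℝ)/p) * einv^((1:ℝ)/p) * ((2:ℝ≥0∞)^p)^((1:ℝ)/p) * (eKε^p)^((1:ℝ)/p) *
          ecJ^((1:ℝ)/p) := by
          rw [ENNReal.mul_rpow_of_nonneg _ _ hq0, ENNReal.mul_rpow_of_nonneg _ _ hq0,
            ENNReal.mul_rpow_of_nonneg _ _ hq0, ENNReal.mul_rpow_of_nonneg _ _ hq0]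
      _ ≤ ecJ * (ENNReal.ofReal (1+cg⁻¹) * ENNReal.ofReal (ε^(-(1/p)))) * 2 *
          (ENNReal.ofReal K * ENNReal.ofReal ε) * ecJ := by
          rw [h2q, hKεfull]
          exact mul_le_mul' (mul_le_mul' (mul_le_mul' (mul_le_mul' hecJq hinvq) le_rfl)
            le_rfl) hecJq
      _ = (ecJ * ENNReal.ofReal (1+cg⁻¹) * 2 * ENNReal.ofReal K * ecJ) *
          (ENNReal.ofReal (ε^(-(1/p))) * ENNReal.ofReal ε) := by ring
      _ = (ecJ * ENNReal.ofReal (1+cg⁻¹) * 2 * ENNReal.ofReal K * ecJ) *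
          ENNReal.ofReal (ε ^ (1 - 1/p)) := by rw [hεcomb]
      _ ≤ ENNReal.ofReal C * ENNReal.ofReal (ε ^ (1 - 1/p)) := by
          refine mul_le_mul_left ?_ _
          rw [hecJdef, show ((2:ℝ≥0∞)) = ENNReal.ofReal 2 by simp,
            ← ENNReal.ofReal_mul (by positivity : (0:ℝ) ≤ cJ),
            ← ENNReal.ofReal_mul (by positivity : (0:ℝ) ≤ cJ*(1+cg⁻¹)),
            ← ENNReal.ofReal_mul (by positivity : (0:ℝ) ≤ cJ*(1+cg⁻¹)*2),
            ← ENNReal.ofReal_mul (by positivity : (0:ℝ) ≤ cJ*(1+cg⁻¹)*2*K)]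
          refine ENNReal.ofReal_le_ofReal ?_
          rw [hCdef]
          have heqr : cJ*(1+cg⁻¹)*2*K*cJ = 2*cJ^2*K*(1+cg⁻¹) := by ring
          linarith
  constructor
  · rw [hSeq, hDeq, hBeq]
    have := aux_split hp main1 SB1 SB2
    calc SΩ ^ (1/p) ≤ (ENNReal.ofReal C * ENNReal.ofReal (ε ^ (1/p))) * Si ^ (1/p) +
          (ENNReal.ofReal C * ENNReal.ofReal ε) * DΩ ^ (1/p) := this
      _ = ENNReal.ofReal C * (ENNReal.ofReal (ε ^ (1/p)) * Si ^ (1/p) +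
          ENNReal.ofReal ε * DΩ ^ (1/p)) := by ring
  · rw [hSeq, hDeq, hBeq]
    have := aux_split hp main2 SB3 SB4
    calc Si ^ (1/p) ≤ (ENNReal.ofReal C * ENNReal.ofReal (ε ^ (-(1/p)))) * SΩ ^ (1/p) +
          (ENNReal.ofReal C * ENNReal.ofReal (ε ^ (1 - 1/p))) * DΩ ^ (1/p) := this
      _ = ENNReal.ofReal C * (ENNReal.ofReal (ε ^ (-(1/p))) * SΩ ^ (1/p) +
          ENNReal.ofReal (ε ^ (1 - 1/p)) * DΩ ^ (1/p)) := by ring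
end
end

section
/- Let Γ be a C² closed surface and Ω_ε the curved thin domain between ε g₀ and ε g₁ as above. There is a constant C > 0 independent of ε such that for all ε ∈ (0,1] and all φ ∈ H¹(Ω_ε): ‖φ‖_{L²(Γ_ε^i)} ≤ C (ε^{−1/2} ‖φ‖_{L²(Ω_ε)} + ‖φ‖_{L²(Ω_ε)}^{1/2} ‖∂_n φ‖_{L²(Ω_ε)}^{1/2}) for i = 0, 1. -/
open Matrix MeasureTheory
open scoped ENNReal

noncomputable section

open Set in
lemma oneDTrace (f f' : ℝ → ℝ) (a b t : ℝ) (hab : a < b) (ht : t = a ∨ t = b)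
    (hfc : Continuous f) (hf' : Measurable f')
    (hd : ∀ r ∈ Set.Ioo a b, HasDerivAt f (f' r) r) :
    ENNReal.ofReal (f t ^ 2) ≤
      ENNReal.ofReal ((b - a)⁻¹) * (∫⁻ r in Set.Ioo a b, ENNReal.ofReal (f r ^ 2)) +
        2 * ∫⁻ r in Set.Ioo a b, ENNReal.ofReal (|f r| * |f' r|) := by
  set K := ∫⁻ r in Set.Ioo a b, ENNReal.ofReal (|f r| * |f' r|) with hKdef
  by_cases hK : K = ⊤
  · rw [hK]
    simp [ENNReal.mul_top]
  -- integrability of |f| * |f'| on Ioo a b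
  have hmeas : Measurable fun r => |f r| * |f' r| :=
    (hfc.measurable.abs).mul hf'.abs
  have hInt : IntegrableOn (fun r => |f r| * |f' r|) (Set.Ioo a b) := by
    refine ⟨hmeas.aestronglyMeasurable, ?_⟩
    rw [hasFiniteIntegral_iff_ofReal ?_]
    · simpa only [abs_mul, abs_abs] using Ne.lt_top hK
    · exact Filter.Eventually.of_forall fun r => mul_nonneg (abs_nonneg _) (abs_nonneg _)
  have hInt2 : IntegrableOn (fun r => 2 * f r * f' r) (Set.Ioo a b) := by
    refine Integrable.mono' (hInt.const_mul 2) ?_ ?_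
    · exact ((measurable_const.mul hfc.measurable).mul hf').aestronglyMeasurable
    · refine Filter.Eventually.of_forall fun r => ?_
      rw [Real.norm_eq_abs]
      rw [abs_mul, abs_mul, abs_two]
      rw [mul_assoc]
  set D := ∫ r in Set.Ioo a b, 2 * (|f r| * |f' r|) with hDdef
  have hDnn : 0 ≤ D :=
    integral_nonneg fun r => by positivity
  have key : ∀ r ∈ Set.Ioo a b, f t ^ 2 ≤ f r ^ 2 + D := by
    intro r hr
    have habs : ∀ s u : ℝ, a ≤ s → u ≤ b → s ≤ u →
        |∫ x in s..u, 2 * f x * f' x| ≤ D := by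
      intro s u hs hu hsu
      calc |∫ x in s..u, 2 * f x * f' x| ≤ ∫ x in s..u, |2 * f x * f' x| :=
            intervalIntegral.abs_integral_le_integral_abs hsu
        _ = ∫ x in Set.Ioc s u, |2 * f x * f' x| := by
            rw [intervalIntegral.integral_of_le hsu]
        _ ≤ ∫ x in Set.Ioo a b, |2 * f x * f' x| := by
            apply setIntegral_mono_set
            · exact (hInt2.abs)
            · exact Filter.Eventually.of_forall fun x => abs_nonneg _
            · have hb : ∀ᵐ x : ℝ ∂volume, x ≠ b := by
                refine ae_iff.2 ?_
                simpa using measure_singleton b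
              filter_upwards [hb] with x hxb hx
              exact ⟨lt_of_le_of_lt hs hx.1, lt_of_le_of_ne (hx.2.trans hu) hxb⟩
        _ = D := by
            rw [hDdef]
            congr 1
            ext x
            rw [abs_mul, abs_mul, abs_two, mul_assoc]
    rcases ht with rfl | rfl
    · -- t = a
      have hint : IntervalIntegrable (fun x => 2 * f x * f' x) volume t r := by
        rw [intervalIntegrable_iff_integrableOn_Ioc_of_le hr.1.le]
        exact hInt2.mono_set fun x hx => ⟨hx.1, lt_of_le_of_lt hx.2 hr.2⟩
      have heq : ∫ x in t..r, 2 * f x * f' x = f r ^ 2 - f t ^ 2 := by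
        refine intervalIntegral.integral_eq_sub_of_hasDerivAt_of_le hr.1.le
          ((hfc.pow 2).continuousOn) (fun x hx => ?_) hint
        simpa [mul_comm] using (hd x ⟨hx.1, hx.2.trans hr.2⟩).pow 2
      have h1 := habs t r le_rfl hr.2.le hr.1.le
      have h2 := neg_abs_le (∫ x in t..r, 2 * f x * f' x)
      linarith
    · -- t = b
      have hint : IntervalIntegrable (fun x => 2 * f x * f' x) volume r t := by
        rw [intervalIntegrable_iff_integrableOn_Ioc_of_le hr.2.le,
          integrableOn_Ioc_iff_integrableOn_Ioo]
        exact hInt2.mono_set fun x hx => ⟨lt_trans hr.1 hx.1, hx.2⟩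
      have heq : ∫ x in r..t, 2 * f x * f' x = f t ^ 2 - f r ^ 2 := by
        refine intervalIntegral.integral_eq_sub_of_hasDerivAt_of_le hr.2.le
          ((hfc.pow 2).continuousOn) (fun x hx => ?_) hint
        simpa [mul_comm] using (hd x ⟨lt_trans hr.1 hx.1, hx.2⟩).pow 2
      have h1 := habs r t hr.1.le le_rfl hr.2.le
      have h2 := le_abs_self (∫ x in r..t, 2 * f x * f' x)
      linarith
  -- conclusion
  have key2 : ∀ r ∈ Set.Ioo a b,
      ENNReal.ofReal (f t ^ 2) ≤ ENNReal.ofReal (f r ^ 2) + ENNReal.ofReal D := fun r hr =>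
    (ENNReal.ofReal_le_ofReal (key r hr)).trans ENNReal.ofReal_add_le
  have hba : 0 < b - a := sub_pos.2 hab
  have hvol : volume (Set.Ioo a b) = ENNReal.ofReal (b - a) := Real.volume_Ioo
  set I := ∫⁻ r in Set.Ioo a b, ENNReal.ofReal (f r ^ 2) with hIdef
  have h3 : ENNReal.ofReal (f t ^ 2) * ENNReal.ofReal (b - a) ≤
      I + ENNReal.ofReal D * ENNReal.ofReal (b - a) := by
    calc ENNReal.ofReal (f t ^ 2) * ENNReal.ofReal (b - a)
        = ∫⁻ _ in Set.Ioo a b, ENNReal.ofReal (f t ^ 2) := by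
          rw [setLIntegral_const, hvol]
      _ ≤ ∫⁻ r in Set.Ioo a b, (ENNReal.ofReal (f r ^ 2) + ENNReal.ofReal D) := by
          refine lintegral_mono_ae ?_
          exact (ae_restrict_iff' measurableSet_Ioo).2 (Filter.Eventually.of_forall key2)
      _ = I + ENNReal.ofReal D * ENNReal.ofReal (b - a) := by
          rw [lintegral_add_right _ measurable_const, setLIntegral_const, hvol]
  have hcancel : ENNReal.ofReal (b - a) * ENNReal.ofReal ((b - a)⁻¹) = 1 := by
    rw [← ENNReal.ofReal_mul hba.le, mul_inv_cancel₀ hba.ne', ENNReal.ofReal_one]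
  have hD2 : ENNReal.ofReal D ≤ 2 * K := by
    rw [hDdef, ofReal_integral_eq_lintegral_ofReal (hInt.const_mul 2)
      (Filter.Eventually.of_forall fun r => by positivity)]
    simp_rw [ENNReal.ofReal_mul (by norm_num : (0:ℝ) ≤ 2)]
    rw [lintegral_const_mul' _ _ (by simp : (ENNReal.ofReal 2) ≠ ⊤)]
    rw [hKdef]
    gcongr
    · norm_num [ENNReal.ofReal_ofNat]
  calc ENNReal.ofReal (f t ^ 2)
      = ENNReal.ofReal (f t ^ 2) * (ENNReal.ofReal (b - a) * ENNReal.ofReal ((b - a)⁻¹)) := by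
        rw [hcancel, mul_one]
    _ = (ENNReal.ofReal (f t ^ 2) * ENNReal.ofReal (b - a)) * ENNReal.ofReal ((b - a)⁻¹) := by
        ring
    _ ≤ (I + ENNReal.ofReal D * ENNReal.ofReal (b - a)) * ENNReal.ofReal ((b - a)⁻¹) :=
        mul_le_mul_left h3 _
    _ = ENNReal.ofReal ((b - a)⁻¹) * I +
        ENNReal.ofReal D * (ENNReal.ofReal (b - a) * ENNReal.ofReal ((b - a)⁻¹)) := by ring
    _ = ENNReal.ofReal ((b - a)⁻¹) * I + ENNReal.ofReal D := by rw [hcancel, mul_one]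
    _ ≤ ENNReal.ofReal ((b - a)⁻¹) * I + 2 * K := add_le_add_right hD2 _

/-- **uniform trace inequality.**  In the curved thin domain
`Ω_ε = {y + r nv(y) : y ∈ Γ, ε g₀(y) < r < ε g₁(y)}` (with `g₁ − g₀ ≥ c_g > 0` and the
sanctioned change of variables with Jacobians uniformly comparable to `1`), there is a
constant `C > 0` independent of `ε` such that for all `ε ∈ (0,1]` and all
`H¹`-regular `φ` and `i = 0, 1`:
`‖φ‖_{L²(Γ_ε^i)} ≤ C (ε^{−1/2} ‖φ‖_{L²(Ω_ε)} + ‖φ‖_{L²(Ω_ε)}^{1/2} ‖∂_n φ‖_{L²(Ω_ε)}^{1/2})`. -/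
theorem stmt15
    (Γ : Set (Fin 3 → ℝ)) (hΓmeas : MeasurableSet Γ) (hΓcomp : IsCompact Γ)
    (μΓ : Measure (Fin 3 → ℝ))
    (nv : (Fin 3 → ℝ) → Fin 3 → ℝ) (hnvm : Measurable nv)
    (hnunit : ∀ y ∈ Γ, nv y ⬝ᵥ nv y = 1)
    (g : Fin 2 → (Fin 3 → ℝ) → ℝ) (hgm : ∀ i, Measurable (g i))
    (cg Mg : ℝ) (hcg : 0 < cg)
    (hglow : ∀ y ∈ Γ, cg ≤ g 1 y - g 0 y)
    (hgbd : ∀ i, ∀ y ∈ Γ, |g i y| ≤ Mg)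
    (cJ : ℝ) (hcJ : 1 ≤ cJ) :
    ∃ C > 0, ∀ ε : ℝ, ε ∈ Set.Ioc (0 : ℝ) 1 →
      ∀ (Ω : Set (Fin 3 → ℝ)) (π : (Fin 3 → ℝ) → Fin 3 → ℝ)
        (J : (Fin 3 → ℝ) → ℝ → ℝ) (w : Fin 2 → (Fin 3 → ℝ) → ℝ)
        (μB : Fin 2 → Measure (Fin 3 → ℝ)),
        IsOpen Ω →
        Ω = {x | ∃ y ∈ Γ, ∃ r : ℝ, ε * g 0 y < r ∧ r < ε * g 1 y ∧ x = y + r • nv y} →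
        Measurable π →
        (∀ y ∈ Γ, ∀ r ∈ Set.Icc (ε * g 0 y) (ε * g 1 y), π (y + r • nv y) = y) →
        (∀ y ∈ Γ, ∀ r : ℝ, cJ⁻¹ ≤ J y r ∧ J y r ≤ cJ) →
        (∀ i, ∀ y ∈ Γ, cJ⁻¹ ≤ w i y ∧ w i y ≤ cJ) →
        (∀ F : (Fin 3 → ℝ) → ℝ≥0∞, Measurable F →
          ∫⁻ x in Ω, F x =
            ∫⁻ y in Γ, (∫⁻ r in Set.Ioo (ε * g 0 y) (ε * g 1 y),
              F (y + r • nv y) * ENNReal.ofReal (J y r)) ∂μΓ) →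
        (∀ i, ∀ F : (Fin 3 → ℝ) → ℝ≥0∞, Measurable F →
          ∫⁻ x, F x ∂(μB i) =
            ∫⁻ y in Γ, F (y + (ε * g i y) • nv y) * ENNReal.ofReal (w i y) ∂μΓ) →
        ∀ φ : (Fin 3 → ℝ) → ℝ,
          ContinuousOn φ (closure Ω) → DifferentiableOn ℝ φ Ω →
          ∀ i : Fin 2,
            (∫⁻ x, ENNReal.ofReal (φ x ^ 2) ∂(μB i)) ^ ((1 : ℝ) / 2) ≤
              ENNReal.ofReal C *
                (ENNReal.ofReal (ε ^ (-(1 / 2) : ℝ)) *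
                    (∫⁻ x in Ω, ENNReal.ofReal (φ x ^ 2)) ^ ((1 : ℝ) / 2) +
                  (∫⁻ x in Ω, ENNReal.ofReal (φ x ^ 2)) ^ ((1 : ℝ) / 4) *
                    (∫⁻ x in Ω,
                      ENNReal.ofReal (fderiv ℝ φ x (nv (π x)) ^ 2)) ^ ((1 : ℝ) / 4)) := by
  have hcJ0 : (0:ℝ) < cJ := lt_of_lt_of_le one_pos hcJ
  set C := cJ * (Real.sqrt cg⁻¹ + 2) with hCdef
  have hC0 : 0 < C := by positivity
  refine ⟨C, hC0, ?_⟩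
  rintro ε ⟨hε0, hε1⟩ Ω π J w μB hΩopen hΩeq hπm hπ hJ hw hco hbd φ hφc hφd i
  -- Tietze extension of φ from the closed set `closure Ω`
  obtain ⟨ψ, hψ⟩ : ∃ ψ : C((Fin 3 → ℝ), ℝ), ∀ x ∈ closure Ω, ψ x = φ x := by
    obtain ⟨g', hg'⟩ :=
      (ContinuousMap.mk _ hφc.restrict).exists_restrict_eq isClosed_closure
    exact ⟨g', fun x hx => by
      simpa using congrFun (congrArg DFunLike.coe hg') ⟨x, hx⟩⟩
  have hψΩ : ∀ x ∈ Ω, ψ x = φ x := fun x hx => hψ x (subset_closure hx)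
  -- the normal-derivative integrand
  set D : (Fin 3 → ℝ) → ℝ := fun x => fderiv ℝ φ x (nv (π x)) with hDdef
  have hevc : Continuous fun q : ((Fin 3 → ℝ) →L[ℝ] ℝ) × (Fin 3 → ℝ) => q.1 q.2 :=
    isBoundedBilinearMap_apply.continuous
  have hDmeas : Measurable D :=
    hevc.measurable.comp ((measurable_fderiv ℝ φ).prodMk (hnvm.comp hπm))
  -- basic measurable integrands
  set F1 : (Fin 3 → ℝ) → ℝ≥0∞ := fun x => ENNReal.ofReal (ψ x ^ 2) with hF1def
  have hF1m : Measurable F1 := ((ψ.continuous.pow 2).measurable).ennreal_ofReal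
  set F2 : (Fin 3 → ℝ) → ℝ≥0∞ := fun x => ENNReal.ofReal (|ψ x| * |D x|) with hF2def
  have hF2m : Measurable F2 :=
    ((ψ.continuous.measurable.abs).mul hDmeas.abs).ennreal_ofReal
  -- the boundary point map
  set p : (Fin 3 → ℝ) → (Fin 3 → ℝ) := fun y => y + (ε * g i y) • nv y with hpdef
  -- interval endpoints
  have hab : ∀ y ∈ Γ, ε * g 0 y < ε * g 1 y := by
    intro y hy
    nlinarith [hglow y hy, mul_pos hε0 (lt_of_lt_of_le hcg (hglow y hy))]
  have hti : ∀ y, ε * g i y = ε * g 0 y ∨ ε * g i y = ε * g 1 y := by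
    intro y; fin_cases i
    · exact Or.inl rfl
    · exact Or.inr rfl
  -- each boundary point lies in the closure of Ω
  have hpcl : ∀ y ∈ Γ, p y ∈ closure Ω := by
    intro y hy
    have hcur : Continuous fun r : ℝ => y + r • nv y :=
      continuous_const.add (continuous_id.smul continuous_const)
    have hsub : (fun r : ℝ => y + r • nv y) '' (Set.Ioo (ε * g 0 y) (ε * g 1 y)) ⊆ Ω := by
      rintro x ⟨r, hr, rfl⟩
      rw [hΩeq]; exact ⟨y, hy, r, hr.1, hr.2, rfl⟩
    have htm : ε * g i y ∈ closure (Set.Ioo (ε * g 0 y) (ε * g 1 y)) := by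
      rw [closure_Ioo (hab y hy).ne]
      rcases hti y with h | h
      · rw [h]; exact ⟨le_rfl, (hab y hy).le⟩
      · rw [h]; exact ⟨(hab y hy).le, le_rfl⟩
    have : p y ∈ (fun r : ℝ => y + r • nv y) '' closure (Set.Ioo (ε * g 0 y) (ε * g 1 y)) :=
      ⟨ε * g i y, htm, rfl⟩
    exact closure_mono hsub (image_closure_subset_closure_image hcur this)
  -- μB i is carried by `closure Ω`
  have hnull : μB i ((closure Ω)ᶜ) = 0 := by
    have hm : MeasurableSet ((closure Ω)ᶜ) := isClosed_closure.measurableSet.compl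
    have := hbd i ((closure Ω)ᶜ.indicator fun _ => 1) (measurable_const.indicator hm)
    rw [lintegral_indicator hm, setLIntegral_one] at this
    rw [this]
    rw [setLIntegral_congr_fun hΓmeas (fun y hy => ?_)]
    · exact lintegral_zero
    · rw [Set.indicator_of_notMem (by simpa using hpcl y hy), zero_mul]
  -- main quantities
  set A := ∫⁻ x in Ω, ENNReal.ofReal (ψ x ^ 2) with hAdef
  set B := ∫⁻ x in Ω, ENNReal.ofReal (D x ^ 2) with hBdef
  set X := ∫⁻ x in Ω, F2 x with hXdef
  -- rewrite the Ω-integral of φ² as A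
  have hA : ∫⁻ x in Ω, ENNReal.ofReal (φ x ^ 2) = A := by
    refine setLIntegral_congr_fun hΩopen.measurableSet
      (fun x hx => ?_)
    simp only [hψΩ x hx]
  -- rewrite the μB-integral of φ² via ψ
  have hLrw : ∫⁻ x, ENNReal.ofReal (φ x ^ 2) ∂(μB i) = ∫⁻ x, F1 x ∂(μB i) := by
    refine lintegral_congr_ae (ae_iff.2 (measure_mono_null ?_ hnull))
    intro x hx
    simp only [Set.mem_setOf_eq] at hx
    simp only [Set.mem_compl_iff]
    intro hxcl
    exact hx (by simp [F1, hψ x hxcl])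
  set L := ∫⁻ x, F1 x ∂(μB i) with hLdef
  -- inner integrals
  set G : (Fin 3 → ℝ) → ℝ≥0∞ := fun y =>
    ∫⁻ r in Set.Ioo (ε * g 0 y) (ε * g 1 y), ENNReal.ofReal (ψ (y + r • nv y) ^ 2) with hGdef
  set H : (Fin 3 → ℝ) → ℝ≥0∞ := fun y =>
    ∫⁻ r in Set.Ioo (ε * g 0 y) (ε * g 1 y),
      ENNReal.ofReal (|ψ (y + r • nv y)| * |fderiv ℝ φ (y + r • nv y) (nv y)|) with hHdef
  -- joint measurability helper
  have hjm : Measurable fun q : (Fin 3 → ℝ) × ℝ => q.1 + q.2 • nv q.1 :=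
    measurable_fst.add (measurable_snd.smul (hnvm.comp measurable_fst))
  have hSm : MeasurableSet {q : (Fin 3 → ℝ) × ℝ | ε * g 0 q.1 < q.2 ∧ q.2 < ε * g 1 q.1} := by
    refine MeasurableSet.inter ?_ ?_
    · exact measurableSet_lt (measurable_const.mul ((hgm 0).comp measurable_fst)) measurable_snd
    · exact measurableSet_lt measurable_snd (measurable_const.mul ((hgm 1).comp measurable_fst))
  have hGmeas : Measurable G := by
    have heq : G = fun y => ∫⁻ r,
        ({q : (Fin 3 → ℝ) × ℝ | ε * g 0 q.1 < q.2 ∧ q.2 < ε * g 1 q.1}.indicator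
          (fun q => ENNReal.ofReal (ψ (q.1 + q.2 • nv q.1) ^ 2)) (y, r)) := by
      funext y
      show (∫⁻ r in Set.Ioo (ε * g 0 y) (ε * g 1 y),
        ENNReal.ofReal (ψ (y + r • nv y) ^ 2)) = _
      rw [← lintegral_indicator measurableSet_Ioo]
      congr 1
    rw [heq]
    exact Measurable.lintegral_prod_right
      (((((ψ.continuous.pow 2).measurable).ennreal_ofReal).comp hjm).indicator hSm)
  -- pointwise 1D trace inequality on Γ
  have hstep5 : ∀ y ∈ Γ, ENNReal.ofReal (ψ (p y) ^ 2) ≤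
      ENNReal.ofReal ((ε * cg)⁻¹) * G y + 2 * H y := by
    intro y hy
    have hcur : Continuous fun r : ℝ => y + r • nv y :=
      continuous_const.add (continuous_id.smul continuous_const)
    have hf'm : Measurable fun r : ℝ => fderiv ℝ φ (y + r • nv y) (nv y) :=
      (measurable_fderiv_apply_const ℝ φ (nv y)).comp hcur.measurable
    have hd : ∀ r ∈ Set.Ioo (ε * g 0 y) (ε * g 1 y),
        HasDerivAt (fun r : ℝ => ψ (y + r • nv y))
          (fderiv ℝ φ (y + r • nv y) (nv y)) r := by
      intro r hr
      have hxΩ : y + r • nv y ∈ Ω := by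
        rw [hΩeq]; exact ⟨y, hy, r, hr.1, hr.2, rfl⟩
      have hdiff : DifferentiableAt ℝ φ (y + r • nv y) :=
        (hφd (y + r • nv y) hxΩ).differentiableAt (hΩopen.mem_nhds hxΩ)
      have hev : (fun z => ψ z) =ᶠ[nhds (y + r • nv y)] φ :=
        Filter.eventually_of_mem (hΩopen.mem_nhds hxΩ) fun z hz => hψΩ z hz
      have h1 : HasFDerivAt (fun z => ψ z) (fderiv ℝ φ (y + r • nv y)) (y + r • nv y) :=
        hdiff.hasFDerivAt.congr_of_eventuallyEq hev
      have h2 : HasDerivAt (fun s : ℝ => y + s • nv y) (nv y) r := by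
        simpa using ((hasDerivAt_id r).smul_const (nv y)).const_add y
      exact h1.comp_hasDerivAt r h2
    have h1d := oneDTrace (fun r : ℝ => ψ (y + r • nv y))
      (fun r : ℝ => fderiv ℝ φ (y + r • nv y) (nv y))
      (ε * g 0 y) (ε * g 1 y) (ε * g i y) (hab y hy) (hti y)
      (ψ.continuous.comp hcur) hf'm hd
    refine le_trans h1d (add_le_add (mul_le_mul_left ?_ _) le_rfl)
    refine ENNReal.ofReal_le_ofReal ?_
    refine inv_anti₀ (mul_pos hε0 hcg) ?_
    nlinarith [hglow y hy]
  have hHmeas : Measurable H := by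
    have hdm : Measurable fun q : (Fin 3 → ℝ) × ℝ =>
        fderiv ℝ φ (q.1 + q.2 • nv q.1) (nv q.1) :=
      hevc.measurable.comp (((measurable_fderiv ℝ φ).comp hjm).prodMk (hnvm.comp measurable_fst))
    have heq : H = fun y => ∫⁻ r,
        ({q : (Fin 3 → ℝ) × ℝ | ε * g 0 q.1 < q.2 ∧ q.2 < ε * g 1 q.1}.indicator
          (fun q => ENNReal.ofReal
            (|ψ (q.1 + q.2 • nv q.1)| * |fderiv ℝ φ (q.1 + q.2 • nv q.1) (nv q.1)|)) (y, r)) := by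
      funext y
      show (∫⁻ r in Set.Ioo (ε * g 0 y) (ε * g 1 y),
        ENNReal.ofReal (|ψ (y + r • nv y)| * |fderiv ℝ φ (y + r • nv y) (nv y)|)) = _
      rw [← lintegral_indicator measurableSet_Ioo]
      congr 1
    rw [heq]
    exact Measurable.lintegral_prod_right
      ((((ψ.continuous.measurable.comp hjm).abs.mul hdm.abs).ennreal_ofReal).indicator hSm)
  -- helper
  have hone : ∀ t : ℝ, cJ⁻¹ ≤ t → (1:ℝ≥0∞) ≤ ENNReal.ofReal cJ * ENNReal.ofReal t := by
    intro t ht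
    rw [show (1:ℝ≥0∞) = ENNReal.ofReal (cJ * cJ⁻¹) by
      rw [mul_inv_cancel₀ hcJ0.ne', ENNReal.ofReal_one]]
    rw [ENNReal.ofReal_mul hcJ0.le]
    exact mul_le_mul_right (ENNReal.ofReal_le_ofReal ht) _
  -- coarea estimates
  have h6a : (∫⁻ y in Γ, G y ∂μΓ) ≤ ENNReal.ofReal cJ * A := by
    have hcoF1 : A = ∫⁻ y in Γ, (∫⁻ r in Set.Ioo (ε * g 0 y) (ε * g 1 y),
        F1 (y + r • nv y) * ENNReal.ofReal (J y r)) ∂μΓ := hco F1 hF1m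
    rw [hcoF1, ← lintegral_const_mul' _ _ ENNReal.ofReal_ne_top]
    refine lintegral_mono_ae ((ae_restrict_iff' hΓmeas).2 (Filter.Eventually.of_forall ?_))
    intro y hy
    show (∫⁻ r in Set.Ioo (ε * g 0 y) (ε * g 1 y),
      ENNReal.ofReal (ψ (y + r • nv y) ^ 2)) ≤ _
    rw [← lintegral_const_mul' _ _ ENNReal.ofReal_ne_top]
    refine lintegral_mono_ae ((ae_restrict_iff' measurableSet_Ioo).2
      (Filter.Eventually.of_forall ?_))
    intro r hr
    calc ENNReal.ofReal (ψ (y + r • nv y) ^ 2)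
        = F1 (y + r • nv y) * 1 := (mul_one _).symm
      _ ≤ F1 (y + r • nv y) * (ENNReal.ofReal cJ * ENNReal.ofReal (J y r)) :=
          mul_le_mul_right (hone _ (hJ y hy r).1) _
      _ = ENNReal.ofReal cJ * (F1 (y + r • nv y) * ENNReal.ofReal (J y r)) := by ring
  have h6b : (∫⁻ y in Γ, H y ∂μΓ) ≤ ENNReal.ofReal cJ * X := by
    have hcoF2 : X = ∫⁻ y in Γ, (∫⁻ r in Set.Ioo (ε * g 0 y) (ε * g 1 y),
        F2 (y + r • nv y) * ENNReal.ofReal (J y r)) ∂μΓ := hco F2 hF2m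
    rw [hcoF2, ← lintegral_const_mul' _ _ ENNReal.ofReal_ne_top]
    refine lintegral_mono_ae ((ae_restrict_iff' hΓmeas).2 (Filter.Eventually.of_forall ?_))
    intro y hy
    show (∫⁻ r in Set.Ioo (ε * g 0 y) (ε * g 1 y),
      ENNReal.ofReal (|ψ (y + r • nv y)| * |fderiv ℝ φ (y + r • nv y) (nv y)|)) ≤ _
    rw [← lintegral_const_mul' _ _ ENNReal.ofReal_ne_top]
    refine lintegral_mono_ae ((ae_restrict_iff' measurableSet_Ioo).2
      (Filter.Eventually.of_forall ?_))
    intro r hr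
    have hπr : π (y + r • nv y) = y := hπ y hy r ⟨hr.1.le, hr.2.le⟩
    have hF2r : F2 (y + r • nv y) =
        ENNReal.ofReal (|ψ (y + r • nv y)| * |fderiv ℝ φ (y + r • nv y) (nv y)|) := by
      simp only [hF2def, hDdef, hπr]
    calc ENNReal.ofReal (|ψ (y + r • nv y)| * |fderiv ℝ φ (y + r • nv y) (nv y)|)
        = F2 (y + r • nv y) * 1 := by rw [hF2r, mul_one]
      _ ≤ F2 (y + r • nv y) * (ENNReal.ofReal cJ * ENNReal.ofReal (J y r)) :=
          mul_le_mul_right (hone _ (hJ y hy r).1) _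
      _ = ENNReal.ofReal cJ * (F2 (y + r • nv y) * ENNReal.ofReal (J y r)) := by ring
  -- Cauchy-Schwarz
  have h7 : X ≤ A ^ ((1:ℝ)/2) * B ^ ((1:ℝ)/2) := by
    have hX2 : X = ∫⁻ x in Ω, (ENNReal.ofReal |ψ x| * ENNReal.ofReal |D x|) :=
      lintegral_congr fun x => ENNReal.ofReal_mul (abs_nonneg _)
    have hH2 := ENNReal.lintegral_mul_le_Lp_mul_Lq (volume.restrict Ω)
      (Real.holderConjugate_iff.mpr ⟨one_lt_two, by norm_num⟩ : Real.HolderConjugate 2 2)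
      (ψ.continuous.measurable.abs.ennreal_ofReal.aemeasurable)
      (hDmeas.abs.ennreal_ofReal.aemeasurable)
    have e1 : ∀ z : ℝ, (ENNReal.ofReal |z|) ^ (2:ℝ) = ENNReal.ofReal (z ^ 2) := by
      intro z
      rw [ENNReal.ofReal_rpow_of_nonneg (abs_nonneg _) (by norm_num)]
      congr 1
      rw [show ((2:ℝ)) = ((2:ℕ):ℝ) by norm_num, Real.rpow_natCast, sq_abs]
    simp only [e1] at hH2
    rw [hX2]
    exact hH2
  -- boundary integral estimates
  have hL1 : L ≤ ENNReal.ofReal cJ * ∫⁻ y in Γ, ENNReal.ofReal (ψ (p y) ^ 2) ∂μΓ := by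
    rw [hLdef, hbd i F1 hF1m, ← lintegral_const_mul' _ _ ENNReal.ofReal_ne_top]
    refine lintegral_mono_ae ((ae_restrict_iff' hΓmeas).2 (Filter.Eventually.of_forall ?_))
    intro y hy
    calc F1 (y + (ε * g i y) • nv y) * ENNReal.ofReal (w i y)
        ≤ F1 (y + (ε * g i y) • nv y) * ENNReal.ofReal cJ :=
          mul_le_mul_right (ENNReal.ofReal_le_ofReal (hw i y hy).2) _
      _ = ENNReal.ofReal cJ * ENNReal.ofReal (ψ (p y) ^ 2) := mul_comm _ _
  have hL2 : (∫⁻ y in Γ, ENNReal.ofReal (ψ (p y) ^ 2) ∂μΓ) ≤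
      ENNReal.ofReal ((ε * cg)⁻¹) * (ENNReal.ofReal cJ * A) +
        2 * (ENNReal.ofReal cJ * X) := by
    calc (∫⁻ y in Γ, ENNReal.ofReal (ψ (p y) ^ 2) ∂μΓ)
        ≤ ∫⁻ y in Γ, (ENNReal.ofReal ((ε * cg)⁻¹) * G y + 2 * H y) ∂μΓ := by
          refine lintegral_mono_ae ((ae_restrict_iff' hΓmeas).2
            (Filter.Eventually.of_forall ?_))
          intro y hy
          exact hstep5 y hy
      _ = ENNReal.ofReal ((ε * cg)⁻¹) * (∫⁻ y in Γ, G y ∂μΓ) +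
          2 * ∫⁻ y in Γ, H y ∂μΓ := by
          rw [lintegral_add_left (hGmeas.const_mul _),
            lintegral_const_mul' _ _ ENNReal.ofReal_ne_top,
            lintegral_const_mul' _ _ (by norm_num : (2:ℝ≥0∞) ≠ ⊤)]
      _ ≤ _ := add_le_add (mul_le_mul_right h6a _) (mul_le_mul_right h6b _)
  -- combine
  have hLT : L ≤ ENNReal.ofReal (cJ * cJ * (ε * cg)⁻¹) * A +
      ENNReal.ofReal (2 * (cJ * cJ)) * (A ^ ((1:ℝ)/2) * B ^ ((1:ℝ)/2)) := by
    refine le_trans hL1 (le_trans (mul_le_mul_right hL2 _) ?_)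
    have hring : ENNReal.ofReal cJ * (ENNReal.ofReal ((ε * cg)⁻¹) *
          (ENNReal.ofReal cJ * A) + 2 * (ENNReal.ofReal cJ * X)) =
        (ENNReal.ofReal cJ * ENNReal.ofReal cJ * ENNReal.ofReal ((ε * cg)⁻¹)) * A +
          (2 * (ENNReal.ofReal cJ * ENNReal.ofReal cJ)) * X := by ring
    rw [hring]
    refine add_le_add (le_of_eq ?_) ?_
    · rw [← ENNReal.ofReal_mul hcJ0.le, ← ENNReal.ofReal_mul (by positivity)]
    · calc (2 * (ENNReal.ofReal cJ * ENNReal.ofReal cJ)) * X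
          ≤ (2 * (ENNReal.ofReal cJ * ENNReal.ofReal cJ)) *
            (A ^ ((1:ℝ)/2) * B ^ ((1:ℝ)/2)) := mul_le_mul_right h7 _
        _ = ENNReal.ofReal (2 * (cJ * cJ)) * (A ^ ((1:ℝ)/2) * B ^ ((1:ℝ)/2)) := by
            rw [← ENNReal.ofReal_mul hcJ0.le,
              ENNReal.ofReal_mul (by norm_num : (0:ℝ) ≤ 2), ENNReal.ofReal_ofNat]
  -- final algebra
  have hCsq : ∀ z : ℝ, 0 ≤ z → z ≤ C ^ 2 → z ^ ((1:ℝ)/2) ≤ C := by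
    intro z hz hzC
    calc z ^ ((1:ℝ)/2) ≤ (C ^ 2) ^ ((1:ℝ)/2) :=
          Real.rpow_le_rpow hz hzC (by norm_num)
      _ = C := by
          rw [← Real.rpow_natCast C 2, ← Real.rpow_mul hC0.le]
          norm_num
  have hsqrt := Real.sq_sqrt (inv_nonneg.2 hcg.le)
  have hT1 : (ENNReal.ofReal (cJ * cJ * (ε * cg)⁻¹) * A) ^ ((1:ℝ)/2) ≤
      ENNReal.ofReal C * (ENNReal.ofReal (ε ^ (-(1 / 2) : ℝ)) * A ^ ((1:ℝ)/2)) := by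
    rw [ENNReal.mul_rpow_of_nonneg _ _ (by norm_num), ← mul_assoc]
    refine mul_le_mul_left ?_ _
    rw [ENNReal.ofReal_rpow_of_nonneg (by positivity) (by norm_num),
      ← ENNReal.ofReal_mul hC0.le]
    refine ENNReal.ofReal_le_ofReal ?_
    have h1 : cJ * cJ * (ε * cg)⁻¹ = (cJ * cJ * cg⁻¹) * ε⁻¹ := by
      field_simp
    rw [h1, Real.mul_rpow (by positivity) (by positivity)]
    have h2 : (ε⁻¹) ^ ((1:ℝ)/2) = ε ^ (-(1 / 2) : ℝ) := by
      rw [← Real.rpow_neg_one ε, ← Real.rpow_mul hε0.le]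
      norm_num
    rw [h2]
    refine mul_le_mul_of_nonneg_right ?_ (Real.rpow_nonneg hε0.le _)
    refine hCsq _ (by positivity) ?_
    rw [hCdef]
    nlinarith [Real.sqrt_nonneg cg⁻¹, sq_nonneg cJ]
  have hT2 : (ENNReal.ofReal (2 * (cJ * cJ)) * (A ^ ((1:ℝ)/2) * B ^ ((1:ℝ)/2))) ^ ((1:ℝ)/2) ≤
      ENNReal.ofReal C * (A ^ ((1:ℝ)/4) * B ^ ((1:ℝ)/4)) := by
    rw [ENNReal.mul_rpow_of_nonneg _ _ (by norm_num)]
    have hsplit : (A ^ ((1:ℝ)/2) * B ^ ((1:ℝ)/2)) ^ ((1:ℝ)/2) =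
        A ^ ((1:ℝ)/4) * B ^ ((1:ℝ)/4) := by
      rw [ENNReal.mul_rpow_of_nonneg _ _ (by norm_num), ← ENNReal.rpow_mul,
        ← ENNReal.rpow_mul]
      norm_num
    rw [hsplit]
    refine mul_le_mul_left ?_ _
    rw [ENNReal.ofReal_rpow_of_nonneg (by positivity) (by norm_num)]
    refine ENNReal.ofReal_le_ofReal ?_
    refine hCsq _ (by positivity) ?_
    rw [hCdef]
    nlinarith [Real.sqrt_nonneg cg⁻¹, sq_nonneg cJ, sq_nonneg (Real.sqrt cg⁻¹)]
  rw [hLrw, hA]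
  calc L ^ ((1:ℝ)/2)
      ≤ (ENNReal.ofReal (cJ * cJ * (ε * cg)⁻¹) * A +
          ENNReal.ofReal (2 * (cJ * cJ)) * (A ^ ((1:ℝ)/2) * B ^ ((1:ℝ)/2))) ^ ((1:ℝ)/2) :=
        ENNReal.rpow_le_rpow hLT (by norm_num)
    _ ≤ (ENNReal.ofReal (cJ * cJ * (ε * cg)⁻¹) * A) ^ ((1:ℝ)/2) +
        (ENNReal.ofReal (2 * (cJ * cJ)) * (A ^ ((1:ℝ)/2) * B ^ ((1:ℝ)/2))) ^ ((1:ℝ)/2) :=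
        ENNReal.rpow_add_le_add_rpow _ _ (by norm_num) (by norm_num)
    _ ≤ ENNReal.ofReal C * (ENNReal.ofReal (ε ^ (-(1 / 2) : ℝ)) * A ^ ((1:ℝ)/2)) +
        ENNReal.ofReal C * (A ^ ((1:ℝ)/4) * B ^ ((1:ℝ)/4)) := add_le_add hT1 hT2
    _ = ENNReal.ofReal C * (ENNReal.ofReal (ε ^ (-(1 / 2) : ℝ)) * A ^ ((1:ℝ)/2) +
        A ^ ((1:ℝ)/4) * B ^ ((1:ℝ)/4)) := (mul_add _ _ _).symm
end
end
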